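/- arXiv:1506.00753 — 5 statements merged into one kernel-verified Lean document; each statement's English description precedes it below -/
import Mathlib

section
/- Let ψ be a pattern of length n with multiplicities μ_1,…,μ_m (m ≥ 2), and define Υ(ψ) = (n²−n)/(Σ_{i=1}^m μ_i² − n) (with Υ(ψ) = ∞ when Σ_{i=1}^m μ_i² = n). Then for every integer k ≥ m: if k < Υ(ψ), the uniform distribution U_k is a local maximum of the function β_k^ψ on the simplex Π_[k]; and if k > Υ(ψ), U_k is a local minimum of β_k^ψ on Π_[k]. -/
/-!
Write `p = k⁻¹ (1 + y)` with `∑ y = 0`. Expanding each product `∏ (1 + y (σ i)) ^ μ i` to second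
order and summing over the injections `σ`, which by symmetry hit every letter, and every ordered
pair of distinct letters, equally often, the linear term cancels and
`β p - β U_k = c (k (𝒰 - n) - (n² - n)) ∑ y² + O(‖y‖ ∑ y²)` with `c > 0`. Hence `U_k` is a local
maximum of `β` on the hyperplane `∑ p = 1` when `k (𝒰 - n) < n² - n`, i.e. `k < Υ`, and a local
minimum when `k > Υ`.
-/

open Finset Function Filter Topology Asymptotics

lemma abs_prod_one_add_sub_le {ι : Type*} [DecidableEq ι] (s : Finset ι) (w : ι → ℝ) {M : ℝ}
    (hM : M ≤ 1) (hw : ∀ t ∈ s, |w t| ≤ M) :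
    |∏ t ∈ s, (1 + w t) - (1 + ∑ t ∈ s, w t + ((∑ t ∈ s, w t) ^ 2 - ∑ t ∈ s, w t ^ 2) / 2)|
      ≤ 4 ^ #s * M * ∑ t ∈ s, w t ^ 2 := by
  induction s using Finset.induction_on with
  | empty => simp
  | @insert a s ha ih =>
    set S := ∑ t ∈ s, w t
    set T := ∑ t ∈ s, w t ^ 2
    have hwa : |w a| ≤ M := hw a (mem_insert_self a s)
    have hP := ih fun t ht => hw t (mem_insert_of_mem ht)
    have hT : 0 ≤ T := sum_nonneg fun t _ => sq_nonneg _
    have hST : |S ^ 2 - T| ≤ (#s + 1) * T := by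
      have := sq_sum_le_card_mul_sum_sq (s := s) (f := w)
      rw [abs_le]; constructor <;> nlinarith [sq_nonneg S]
    have hcard : ((#s : ℝ) + 1) / 2 ≤ 2 * 4 ^ #s := by
      have : (#s + 1 : ℝ) ≤ 4 ^ #s := by exact_mod_cast Nat.lt_pow_self (by norm_num)
      linarith
    have hone : |1 + w a| ≤ 2 := (abs_add_le _ _).trans (by rw [abs_one]; linarith)
    rw [prod_insert ha, sum_insert ha, sum_insert ha, card_insert_of_notMem ha, pow_succ]
    calc _ = |(1 + w a) * (∏ t ∈ s, (1 + w t) - (1 + S + (S ^ 2 - T) / 2))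
              + w a * ((S ^ 2 - T) / 2)| := by congr 1; ring
      _ ≤ 2 * (4 ^ #s * M * T) + M * ((#s + 1) * T / 2) := by
          refine (abs_add_le _ _).trans (add_le_add ?_ ?_) <;> rw [abs_mul]
          · exact mul_le_mul hone hP (abs_nonneg _) zero_le_two
          · rw [abs_div, abs_two]
            exact mul_le_mul hwa (by linarith) (by positivity) ((abs_nonneg _).trans hwa)
      _ ≤ 4 ^ #s * 4 * M * (w a ^ 2 + T) := by
          have hM0 : 0 ≤ M := (abs_nonneg _).trans hwa
          nlinarith [mul_le_mul_of_nonneg_left hcard (mul_nonneg hM0 hT), sq_nonneg (w a),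
            mul_nonneg (mul_nonneg hM0 (pow_nonneg (zero_le_four (α := ℝ)) #s)) (sq_nonneg (w a))]

lemma abs_prod_one_add_pow_sub_le {ι : Type*} [Fintype ι] (μ : ι → ℕ) (x : ι → ℝ) {M : ℝ}
    (hM : M ≤ 1) (hx : ∀ i, |x i| ≤ M) :
    |∏ i, (1 + x i) ^ μ i
        - (1 + ∑ i, μ i * x i + ((∑ i, μ i * x i) ^ 2 - ∑ i, μ i * x i ^ 2) / 2)|
      ≤ 4 ^ (∑ i, μ i) * M * ∑ i, μ i * x i ^ 2 := by
  classical
  have key := abs_prod_one_add_sub_le (univ : Finset (Σ i, Fin (μ i))) (fun t => x t.1) hM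
    fun t _ => hx t.1
  simp only [← univ_sigma_univ, prod_sigma, sum_sigma, prod_const, sum_const, card_univ,
    Fintype.card_fin, nsmul_eq_mul, card_sigma] at key
  simpa using key

lemma card_mul_sum_comp_eq_of_card_fiber_eq {ι γ R : Type*} [DecidableEq γ] [CommSemiring R]
    {s : Finset ι} {t : Finset γ} {φ : ι → γ} (hφ : ∀ a ∈ s, φ a ∈ t)
    (hfib : ∀ x ∈ t, ∀ y ∈ t, #{a ∈ s | φ a = x} = #{a ∈ s | φ a = y}) (f : γ → R) :
    #t * ∑ a ∈ s, f (φ a) = #s * ∑ x ∈ t, f x := by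
  obtain rfl | ⟨x₀, hx₀⟩ := t.eq_empty_or_nonempty
  · simp [eq_empty_of_forall_notMem fun a ha => notMem_empty _ (hφ a ha)]
  have hsum : ∑ a ∈ s, f (φ a) = #{a ∈ s | φ a = x₀} * ∑ x ∈ t, f x := by
    rw [← sum_fiberwise_of_maps_to' hφ, mul_sum]
    exact sum_congr rfl fun x hx => by rw [sum_const, nsmul_eq_mul, hfib x hx x₀ hx₀]
  have hcard : #s = #t * #{a ∈ s | φ a = x₀} := by
    rw [card_eq_sum_card_fiberwise hφ, ← smul_eq_mul, ← sum_const]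
    exact sum_congr rfl fun x hx => hfib x hx x₀ hx₀
  rw [hsum, hcard]
  push_cast
  ring

lemma sum_offDiag_mul {γ : Type*} [Fintype γ] [DecidableEq γ] (f g : γ → ℝ) :
    ∑ x ∈ (univ : Finset γ).offDiag, f x.1 * g x.2 = (∑ c, f c) * (∑ c, g c) - ∑ c, f c * g c := by
  rw [sum_mul_sum, ← sum_product', ← diag_union_offDiag, sum_union (disjoint_diag_offDiag _),
    sum_diag]
  ring

abbrev injectiveMaps (α β : Type*) [Fintype α] [DecidableEq α] [Fintype β] [DecidableEq β] :
    Finset (α → β) :=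
  univ.filter fun σ => Injective σ

section InjectiveMaps

variable {α β R : Type*} [Fintype α] [DecidableEq α] [Fintype β] [DecidableEq β] [CommSemiring R]

lemma card_filter_injectiveMaps_eq_of_perm (π : Equiv.Perm β) {P Q : (α → β) → Prop}
    [DecidablePred P] [DecidablePred Q] (h : ∀ σ, P σ ↔ Q (π ∘ σ)) :
    #{σ ∈ injectiveMaps α β | P σ} = #{σ ∈ injectiveMaps α β | Q σ} := by
  refine card_nbij' (π ∘ ·) (π.symm ∘ ·) ?_ ?_ ?_ ?_ <;> intro σ
  · simp +contextual [← h, π.injective.comp]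
  · simp +contextual [h, ← comp_assoc, π.symm.injective.comp]
  · intro; funext; simp
  · intro; funext; simp

lemma card_mul_sum_injectiveMaps_apply (i : α) (g : β → R) :
    Fintype.card β * ∑ σ ∈ injectiveMaps α β, g (σ i) = #(injectiveMaps α β) * ∑ b, g b := by
  refine card_mul_sum_comp_eq_of_card_fiber_eq (fun _ _ => mem_univ _) (fun a _ b _ => ?_) g
  exact card_filter_injectiveMaps_eq_of_perm (Equiv.swap a b) fun σ => by
    simp [Equiv.swap_apply_eq_iff]

lemma card_mul_sum_injectiveMaps_apply_apply {i i' : α} (hi : i ≠ i') (f : β → β → R) :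
    #(univ : Finset β).offDiag * ∑ σ ∈ injectiveMaps α β, f (σ i) (σ i') =
      #(injectiveMaps α β) * ∑ x ∈ univ.offDiag, f x.1 x.2 := by
  refine card_mul_sum_comp_eq_of_card_fiber_eq (φ := fun σ : α → β => (σ i, σ i')) (fun σ hσ => ?_)
    (fun x hx y hy => ?_) (fun x => f x.1 x.2)
  · simpa using fun h => hi ((mem_filter.1 hσ).2 h)
  · simp only [mem_offDiag, mem_univ, true_and] at hx hy
    obtain ⟨π, hπ⟩ := Equiv.Perm.exists_extending_pair ![x.1, x.2] ![y.1, y.2]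
      (by simpa using hx) (by simpa using hy)
    refine card_filter_injectiveMaps_eq_of_perm π fun σ => ?_
    have h0 := hπ 0
    have h1 := hπ 1
    simp only [Matrix.cons_val_zero, Matrix.cons_val_one] at h0 h1
    simp [Prod.ext_iff, ← h0, ← h1, π.injective.eq_iff]

lemma card_injectiveMaps_pos (h : Fintype.card α ≤ Fintype.card β) : 0 < #(injectiveMaps α β) := by
  obtain ⟨e⟩ := Function.Embedding.nonempty_of_card_le h
  exact card_pos.2 ⟨e, mem_filter.2 ⟨mem_univ _, e.injective⟩⟩

lemma sum_injectiveMaps_apply_eq_zero [Nonempty β] {y : β → ℝ} (hy : ∑ b, y b = 0) (i : α) :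
    ∑ σ ∈ injectiveMaps α β, y (σ i) = 0 := by
  have h := card_mul_sum_injectiveMaps_apply i y
  rw [hy, mul_zero] at h
  exact (mul_eq_zero.1 h).resolve_left (by simp)

lemma sum_injectiveMaps_apply_mul_apply (hk : 2 ≤ Fintype.card β) {y : β → ℝ}
    (hy : ∑ b, y b = 0) (i i' : α) :
    ∑ σ ∈ injectiveMaps α β, y (σ i) * y (σ i') =
      #(injectiveMaps α β) * (∑ b, y b ^ 2) * ((if i = i' then (Fintype.card β : ℝ) else 0) - 1)
        / (Fintype.card β * (Fintype.card β - 1)) := by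
  have hk' : (2 : ℝ) ≤ Fintype.card β := by exact_mod_cast hk
  rw [eq_div_iff (by nlinarith)]
  split_ifs with h
  · subst h
    have := card_mul_sum_injectiveMaps_apply (R := ℝ) i (fun b => y b ^ 2)
    simp only [← sq]
    linear_combination (Fintype.card β - 1 : ℝ) * this
  · have := card_mul_sum_injectiveMaps_apply_apply (R := ℝ) h (fun a b => y a * y b)
    rw [sum_offDiag_mul, hy, offDiag_card, card_univ,
      Nat.cast_sub (Nat.le_mul_self _)] at this
    push_cast at this
    simp only [← sq] at this
    linear_combination this

lemma sum_injectiveMaps_sum_mul_apply_sq [Nonempty β] {n : ℕ} {μ : α → ℕ} (hn : ∑ i, μ i = n)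
    (y : β → ℝ) :
    ∑ σ ∈ injectiveMaps α β, ∑ i, μ i * y (σ i) ^ 2 =
      n * #(injectiveMaps α β) * (∑ b, y b ^ 2) / Fintype.card β := by
  rw [eq_div_iff (by simp), sum_comm, sum_mul, ← hn]
  push_cast
  rw [sum_mul, sum_mul]
  refine sum_congr rfl fun i _ => ?_
  rw [← mul_sum, mul_assoc, mul_comm _ (Fintype.card β : ℝ),
    card_mul_sum_injectiveMaps_apply i (fun b => y b ^ 2)]
  ring

lemma sum_injectiveMaps_second_order_part (hk : 2 ≤ Fintype.card β) {y : β → ℝ} (hy : ∑ b, y b = 0)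
    {n U : ℕ} {μ : α → ℕ} (hn : ∑ i, μ i = n) (hU : ∑ i, μ i ^ 2 = U) :
    ∑ σ ∈ injectiveMaps α β, (∑ i, μ i * y (σ i)
        + ((∑ i, μ i * y (σ i)) ^ 2 - ∑ i, μ i * y (σ i) ^ 2) / 2) =
      #(injectiveMaps α β) * (Fintype.card β * ((U : ℝ) - n) - (n ^ 2 - n))
        / (2 * Fintype.card β * (Fintype.card β - 1)) * ∑ b, y b ^ 2 := by
  have : Nonempty β := Fintype.card_pos_iff.1 (by omega)
  have hk' : (2 : ℝ) ≤ Fintype.card β := by exact_mod_cast hk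
  have hT := sum_injectiveMaps_sum_mul_apply_sq hn y
  set k : ℝ := (Fintype.card β : ℝ)
  set N : ℝ := (#(injectiveMaps α β) : ℝ)
  set Q := ∑ b, y b ^ 2
  have hlin : ∑ σ ∈ injectiveMaps α β, ∑ i, μ i * y (σ i) = 0 := by
    rw [sum_comm]
    exact sum_eq_zero fun i _ => by rw [← mul_sum, sum_injectiveMaps_apply_eq_zero hy, mul_zero]
  have hcoef : ∑ i, ∑ i', (μ i : ℝ) * μ i' * ((if i = i' then k else 0) - 1) = k * U - n ^ 2 := by
    simp [mul_sub, sum_sub_distrib, mul_ite, ← sum_mul_sum, ← hU, ← hn, mul_sum, sq]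
    exact sum_congr rfl fun _ _ => by ring
  have hsq : ∑ σ ∈ injectiveMaps α β, (∑ i, μ i * y (σ i)) ^ 2 =
      N * Q / (k * (k - 1)) * (k * U - n ^ 2) := by
    calc _ = ∑ i, ∑ i', ∑ σ ∈ injectiveMaps α β, μ i * y (σ i) * (μ i' * y (σ i')) := by
          simp_rw [sq, sum_mul_sum]
          rw [sum_comm]
          exact sum_congr rfl fun i _ => sum_comm
      _ = ∑ i, ∑ i', μ i * μ i' * (N * Q * ((if i = i' then k else 0) - 1) / (k * (k - 1))) := by
          refine sum_congr rfl fun i _ => sum_congr rfl fun i' _ => ?_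
          rw [← sum_injectiveMaps_apply_mul_apply hk hy, mul_sum]
          exact sum_congr rfl fun σ _ => by ring
      _ = _ := by
          rw [← hcoef, mul_sum (s := (univ : Finset α))]
          refine sum_congr rfl fun i _ => ?_
          rw [mul_sum (s := (univ : Finset α))]
          exact sum_congr rfl fun i' _ => by ring
  have hk1 : k - 1 ≠ 0 := by linarith
  rw [sum_add_distrib, ← sum_div, sum_sub_distrib, hlin, hsq, hT]
  field_simp
  ring

end InjectiveMaps

section PatternProb

variable {α β : Type*} [Fintype α] [DecidableEq α] [Fintype β] [DecidableEq β]

/-- The paper's `P(ψ; p)` for a pattern `ψ` with multiplicities `μ`. -/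
def patternProb (μ : α → ℕ) (p : β → ℝ) : ℝ :=
  ∑ σ ∈ injectiveMaps α β, ∏ i, p (σ i) ^ μ i

lemma patternProb_mul_one_add {n : ℕ} {μ : α → ℕ} (hn : ∑ i, μ i = n) (c : ℝ) (y : β → ℝ) :
    patternProb μ (fun b => c * (1 + y b)) =
      c ^ n * ∑ σ ∈ injectiveMaps α β, ∏ i, (1 + y (σ i)) ^ μ i := by
  simp only [patternProb, mul_pow, prod_mul_distrib, prod_pow_eq_pow_sum, hn, mul_sum]

lemma patternProb_const {n : ℕ} {μ : α → ℕ} (hn : ∑ i, μ i = n) (c : ℝ) :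
    patternProb μ (fun _ : β => c) = c ^ n * #(injectiveMaps α β) := by
  simpa using patternProb_mul_one_add hn c 0

lemma abs_patternProb_sub_le (hk : 2 ≤ Fintype.card β) {n U : ℕ} {μ : α → ℕ}
    (hn : ∑ i, μ i = n) (hU : ∑ i, μ i ^ 2 = U) {y : β → ℝ} (hy : ∑ b, y b = 0) {M : ℝ}
    (hM : M ≤ 1) (hyM : ∀ b, |y b| ≤ M) :
    |patternProb μ (fun b => (Fintype.card β : ℝ)⁻¹ * (1 + y b))
        - patternProb μ (fun _ : β => (Fintype.card β : ℝ)⁻¹)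
        - (Fintype.card β : ℝ)⁻¹ ^ n * (#(injectiveMaps α β) *
            (Fintype.card β * ((U : ℝ) - n) - (n ^ 2 - n))
            / (2 * Fintype.card β * (Fintype.card β - 1))) * ∑ b, y b ^ 2|
      ≤ (Fintype.card β : ℝ)⁻¹ ^ n * (4 ^ n * n * #(injectiveMaps α β) / Fintype.card β)
          * M * ∑ b, y b ^ 2 := by
  have : Nonempty β := Fintype.card_pos_iff.1 (by omega)
  have hpos : (0 : ℝ) < (Fintype.card β : ℝ)⁻¹ ^ n := by positivity
  calc _ = (Fintype.card β : ℝ)⁻¹ ^ n * |∑ σ ∈ injectiveMaps α β, (∏ i, (1 + y (σ i)) ^ μ i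
          - (1 + ∑ i, μ i * y (σ i)
            + ((∑ i, μ i * y (σ i)) ^ 2 - ∑ i, μ i * y (σ i) ^ 2) / 2))| := by
        rw [← abs_of_pos hpos, ← abs_mul, abs_of_pos hpos, patternProb_mul_one_add hn,
          patternProb_const hn, mul_assoc _ _ (∑ b, y b ^ 2),
          ← sum_injectiveMaps_second_order_part hk hy hn hU]
        simp only [sum_sub_distrib, add_assoc, sum_add_distrib, sum_const, nsmul_eq_mul, mul_one]
        ring_nf
    _ ≤ (Fintype.card β : ℝ)⁻¹ ^ n *
          ∑ σ ∈ injectiveMaps α β, 4 ^ n * M * ∑ i, μ i * y (σ i) ^ 2 := by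
        refine mul_le_mul_of_nonneg_left ((abs_sum_le_sum_abs _ _).trans
          (sum_le_sum fun σ _ => ?_)) hpos.le
        simpa [hn] using abs_prod_one_add_pow_sub_le μ (y ∘ σ) hM fun i => hyM (σ i)
    _ = _ := by
        rw [← mul_sum, sum_injectiveMaps_sum_mul_apply_sq hn]
        ring

lemma isLittleO_patternProb_sub (hk : 2 ≤ Fintype.card β) {n U : ℕ} {μ : α → ℕ}
    (hn : ∑ i, μ i = n) (hU : ∑ i, μ i ^ 2 = U) :
    (fun p : β → ℝ => patternProb μ p - patternProb μ (fun _ : β => (Fintype.card β : ℝ)⁻¹)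
        - (Fintype.card β : ℝ)⁻¹ ^ n * (#(injectiveMaps α β) *
            (Fintype.card β * ((U : ℝ) - n) - (n ^ 2 - n))
            / (2 * Fintype.card β * (Fintype.card β - 1))) * ∑ b, (Fintype.card β * p b - 1) ^ 2)
      =o[𝓝[{p | ∑ b, p b = 1}] (fun _ : β => (Fintype.card β : ℝ)⁻¹)]
      fun p => ∑ b, (Fintype.card β * p b - 1) ^ 2 := by
  have hk' : (0 : ℝ) < Fintype.card β := by norm_cast; omega
  rw [isLittleO_iff]
  intro ε hε
  set C : ℝ := (Fintype.card β : ℝ)⁻¹ ^ n * (4 ^ n * n * #(injectiveMaps α β) / Fintype.card β)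
  have hC : 0 ≤ C := by positivity
  set M := min 1 (ε / (C + 1))
  have hM : 0 < M := lt_min one_pos (by positivity)
  have hCM : C * M ≤ ε := calc
    C * M ≤ C * (ε / (C + 1)) := by gcongr; exact min_le_right _ _
    _ ≤ ε := by rw [mul_div_assoc', div_le_iff₀ (by linarith)]; nlinarith
  filter_upwards [self_mem_nhdsWithin,
    nhdsWithin_le_nhds (Metric.ball_mem_nhds _ (div_pos hM hk'))] with p (hp : ∑ b, p b = 1) hball
  have hyM : ∀ b, |Fintype.card β * p b - 1| ≤ M := fun b => calc
    |Fintype.card β * p b - 1| = Fintype.card β * dist (p b) (Fintype.card β : ℝ)⁻¹ := by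
        rw [Real.dist_eq, ← abs_of_pos hk', ← abs_mul, abs_of_pos hk', mul_sub,
          mul_inv_cancel₀ hk'.ne']
    _ ≤ Fintype.card β * (M / Fintype.card β) := by
        gcongr
        exact (dist_le_pi_dist p _ b).trans (Metric.mem_ball.1 hball).le
    _ = M := by field_simp
  have hy : ∑ b, ((Fintype.card β : ℝ) * p b - 1) = 0 := by
    simp [sum_sub_distrib, ← mul_sum, hp]
  have key := abs_patternProb_sub_le hk hn hU hy (min_le_left _ _) hyM
  have hp' : (fun b => (Fintype.card β : ℝ)⁻¹ * (1 + (Fintype.card β * p b - 1))) = p := by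
    funext b; field_simp; ring
  rw [hp'] at key
  rw [Real.norm_eq_abs, Real.norm_of_nonneg (sum_nonneg fun _ _ => sq_nonneg _)]
  exact key.trans (by gcongr)

end PatternProb

lemma isLocalMaxOn_of_isLittleO {X : Type*} [TopologicalSpace X] {f q : X → ℝ} {s : Set X}
    {x₀ : X} {a : ℝ} (ha : a < 0) (hq : ∀ x, 0 ≤ q x)
    (h : (fun x => f x - f x₀ - a * q x) =o[𝓝[s] x₀] q) : IsLocalMaxOn f s x₀ := by
  filter_upwards [h.def (neg_pos.2 ha)] with x hx
  rw [Real.norm_eq_abs, Real.norm_of_nonneg (hq x)] at hx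
  linarith [(abs_le.1 hx).2]

lemma isLocalMinOn_of_isLittleO {X : Type*} [TopologicalSpace X] {f q : X → ℝ} {s : Set X}
    {x₀ : X} {a : ℝ} (ha : 0 < a) (hq : ∀ x, 0 ≤ q x)
    (h : (fun x => f x - f x₀ - a * q x) =o[𝓝[s] x₀] q) : IsLocalMinOn f s x₀ := by
  filter_upwards [h.def ha] with x hx
  rw [Real.norm_eq_abs, Real.norm_of_nonneg (hq x)] at hx
  linarith [(abs_le.1 hx).1]

lemma mul_sub_lt_of_lt_upsilon {n U k : ℕ} (hn : 2 ≤ n) (hnU : n ≤ U)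
    (h : U = n ∨ (k : ℝ) < ((n : ℝ) ^ 2 - n) / ((U : ℝ) - n)) :
    (k : ℝ) * (U - n) < n ^ 2 - n := by
  have hn' : (2 : ℝ) ≤ n := by exact_mod_cast hn
  obtain rfl | hne := eq_or_ne U n
  · nlinarith
  have hpos : (0 : ℝ) < U - n := sub_pos.2 (by exact_mod_cast hnU.lt_of_ne hne.symm)
  simpa [hne, lt_div_iff₀ hpos] using h

lemma lt_mul_sub_of_upsilon_lt {n U k : ℕ} (hnU : n ≤ U)
    (h : U ≠ n ∧ ((n : ℝ) ^ 2 - n) / ((U : ℝ) - n) < k) :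
    (n : ℝ) ^ 2 - n < k * (U - n) := by
  have hpos : (0 : ℝ) < U - n := sub_pos.2 (by exact_mod_cast hnU.lt_of_ne h.1.symm)
  simpa [div_lt_iff₀ hpos] using h.2

theorem pml_phase_transition_general
    (n m : ℕ) (hm : 2 ≤ m) (hmn : m ≤ n)
    (μ : Fin m → ℕ) (hμsum : ∑ i, μ i = n)
    (k : ℕ) (hk : m ≤ k)
    (β : (Fin k → ℝ) → ℝ)
    (hβ : ∀ p, β p =
      ∑ σ ∈ Finset.univ.filter (fun σ : Fin m → Fin k => Function.Injective σ),
        ∏ i, p (σ i) ^ μ i)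
    (simplex : Set (Fin k → ℝ))
    (hsimplex : simplex = {p | (∀ i, 0 ≤ p i) ∧ ∑ i, p i = 1})
    (Uk : Fin k → ℝ) (hUk : Uk = fun _ => (k : ℝ)⁻¹)
    (𝒰 : ℕ) (h𝒰 : 𝒰 = ∑ i, μ i ^ 2) :
    ((𝒰 = n ∨ (k : ℝ) < ((n : ℝ) ^ 2 - n) / ((𝒰 : ℝ) - n)) →
      IsLocalMaxOn β simplex Uk) ∧
    ((𝒰 ≠ n ∧ ((n : ℝ) ^ 2 - n) / ((𝒰 : ℝ) - n) < (k : ℝ)) →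
      IsLocalMinOn β simplex Uk) := by
  obtain rfl : β = patternProb μ := funext hβ
  subst hsimplex hUk
  have hk2 : 2 ≤ Fintype.card (Fin k) := by simpa using hm.trans hk
  have hnU : n ≤ 𝒰 := h𝒰 ▸ hμsum ▸ sum_le_sum fun i _ => Nat.le_self_pow two_ne_zero _
  have hN : (0 : ℝ) < #(injectiveMaps (Fin m) (Fin k)) := by
    exact_mod_cast card_injectiveMaps_pos (by simpa using hk)
  have hk' : (2 : ℝ) ≤ k := by exact_mod_cast hm.trans hk
  have hlo := isLittleO_patternProb_sub hk2 hμsum h𝒰.symm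
  simp only [Fintype.card_fin] at hlo
  have hsq : ∀ p : Fin k → ℝ, 0 ≤ ∑ b, ((k : ℝ) * p b - 1) ^ 2 :=
    fun p => sum_nonneg fun _ _ => sq_nonneg _
  have hsub : {p : Fin k → ℝ | (∀ i, 0 ≤ p i) ∧ ∑ i, p i = 1} ⊆ {p | ∑ i, p i = 1} :=
    fun p hp => hp.2
  refine ⟨fun h => (isLocalMaxOn_of_isLittleO ?_ hsq hlo).on_subset hsub,
    fun h => (isLocalMinOn_of_isLittleO ?_ hsq hlo).on_subset hsub⟩
  · have := mul_sub_lt_of_lt_upsilon (hm.trans hmn) hnU h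
    refine mul_neg_of_pos_of_neg (by positivity) (div_neg_of_neg_of_pos ?_ (by nlinarith))
    exact mul_neg_of_pos_of_neg hN (by linarith)
  · have := lt_mul_sub_of_upsilon_lt hnU h
    exact mul_pos (by positivity) (div_pos (mul_pos hN (by linarith)) (by nlinarith))

/-- **Phase transition in the PML problem** (Theorem 1).
For a pattern ψ of length n with multiplicities μ₁,…,μ_m (m ≥ 2), let
Υ(ψ) = (n²−n)/(Σ μᵢ² − n), interpreted as ∞ when Σ μᵢ² = n.  For every k ≥ m:
if k < Υ(ψ) then the uniform distribution U_k is a local maximum of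
β_k^ψ : p ↦ P(ψ;p) on the simplex Π_[k], and if k > Υ(ψ) then U_k is a local
minimum. -/
theorem pml_phase_transition
    (n m : ℕ) (hm : 2 ≤ m) (hmn : m ≤ n)
    (μ : Fin m → ℕ) (hμpos : ∀ i, 0 < μ i) (hμsum : ∑ i, μ i = n)
    (k : ℕ) (hk : m ≤ k)
    (β : (Fin k → ℝ) → ℝ)
    (hβ : ∀ p, β p =
      ∑ σ ∈ Finset.univ.filter (fun σ : Fin m → Fin k => Function.Injective σ),
        ∏ i, p (σ i) ^ μ i)
    (simplex : Set (Fin k → ℝ))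
    (hsimplex : simplex = {p | (∀ i, 0 ≤ p i) ∧ ∑ i, p i = 1})
    (Uk : Fin k → ℝ) (hUk : Uk = fun _ => (k : ℝ)⁻¹)
    (𝒰 : ℕ) (h𝒰 : 𝒰 = ∑ i, μ i ^ 2) :
    ((𝒰 = n ∨ (k : ℝ) < ((n : ℝ) ^ 2 - n) / ((𝒰 : ℝ) - n)) →
      IsLocalMaxOn β simplex Uk) ∧
    ((𝒰 ≠ n ∧ ((n : ℝ) ^ 2 - n) / ((𝒰 : ℝ) - n) < (k : ℝ)) →
      IsLocalMinOn β simplex Uk) :=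
  pml_phase_transition_general n m hm hmn μ hμsum k hk β hβ simplex hsimplex Uk hUk 𝒰 h𝒰
end

section
/- Let ψ be a pattern of length n with multiplicities μ_1,…,μ_m (m ≥ 2), let k ≥ m and M ≥ 1 be integers, let ξ ∈ ℝ^k be a unit vector with Σ_{j=1}^k ξ_j = 0, and set p(t) = U_k + tξ and G_{k,M}(t) = β_{k,M}^ψ(p(t)) for t in a sufficiently small interval around 0. Then G_{k,M}'(0) = 0 and G_{k,M}''(0) = [(M!)^{2k−k²}]^{1/M} (Z_{k,M})^{1/M} k^{1−n} [ (k²/(k−1)²)·(Var_{k,M}(a_{1,1})/M)·( k Σ_{i=1}^m μ_i² − n² ) − n ], where Var_{k,M}(a_{1,1}) is the variance of the entry a_{1,1} of a random matrix A ∈ A_{k,M} distributed according to Q_{k,M}. -/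
/-!
Write `e_i(A) = Σ_j μ_j a_{i,j}`. Then `G = (C·F)^{1/M}` with the polynomial
`F(t) = Σ_A w(A) ∏_i (1/k + t ξ_i)^{e_i(A)}`, and once `F'(0) = 0` is known,
`G''(0) = (1/M) G(0) F''(0)/F(0)`, where `F''(0)/F(0) = k² E[(Σ_i e_i ξ_i)² − Σ_i e_i ξ_i²]`
under `Q_{k,M}`.

Both `A_{k,M}` and `w` are invariant under permuting rows and columns independently. Hence
`E[a_{i,j}] = M/k`, which together with `Σ ξ_i = 0` gives `F'(0) = 0`. Likewise the centred
covariance of `a_{i,j}` and `a_{i',j'}` depends only on whether `i = i'` and whether `j = j'`.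
The centred rows and columns sum to zero, so this covariance must be
`Var(a_{1,1}) u(i,i') u(j,j')` with `u = (k I − J)/(k − 1)`. The quadratic form in `ξ ⊗ μ`
then factorises as `Var(a_{1,1}) · k|ξ|²/(k−1) · (k Σ μ_i² − n²)/(k−1)`, and the linear term
is `(M/k) n |ξ|²`.
-/

open Finset Function

section AffineProdPow

variable {ι : Type*} [Fintype ι]

noncomputable def affineProdPow (c : ℝ) (b : ι → ℝ) (D : ι → ℕ) (t : ℝ) : ℝ :=
  ∏ i, (c + t * b i) ^ D i

lemma affineProdPow_zero (c : ℝ) (b : ι → ℝ) (D : ι → ℕ) :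
    affineProdPow c b D 0 = c ^ ∑ i, D i := by
  simp [affineProdPow, prod_pow_eq_pow_sum]

variable [DecidableEq ι]

lemma sum_apply_update_add {M : Type*} [AddCommMonoid M] (g : ι → ℕ → M) (D : ι → ℕ) (i : ι)
    (v : ℕ) : ∑ j, g j (update D i v j) + g i (D i) = ∑ j, g j (D j) + g i v := by
  rw [← add_sum_erase _ _ (mem_univ i), ← add_sum_erase _ (fun j => g j (D j)) (mem_univ i),
    update_self, sum_congr rfl fun j hj => by rw [update_of_ne (ne_of_mem_erase hj)]]
  abel

lemma affineProdPow_update (c : ℝ) (b : ι → ℝ) (D : ι → ℕ) (i : ι) (v : ℕ) (t : ℝ) :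
    affineProdPow c b (update D i v) t
      = (c + t * b i) ^ v * ∏ j ∈ univ.erase i, (c + t * b j) ^ D j := by
  rw [affineProdPow, ← mul_prod_erase univ _ (mem_univ i), update_self]
  congr 1
  exact prod_congr rfl fun j hj => by rw [update_of_ne (ne_of_mem_erase hj)]

lemma hasDerivAt_affineProdPow (c : ℝ) (b : ι → ℝ) (D : ι → ℕ) (t : ℝ) :
    HasDerivAt (affineProdPow c b D)
      (∑ i, D i * b i * affineProdPow c b (update D i (D i - 1)) t) t := by
  have hfactor (j : ι) : HasDerivAt (fun s => (c + s * b j) ^ D j)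
      (D j * (c + t * b j) ^ (D j - 1) * b j) t := by
    have h := ((hasDerivAt_id' t).mul_const (b j)).const_add c
    rw [one_mul] at h
    exact h.fun_pow (D j)
  refine (HasDerivAt.fun_finsetProd fun j _ => hfactor j).congr_deriv ?_
  exact sum_congr rfl fun i _ => by rw [affineProdPow_update, smul_eq_mul]; ring

lemma sum_mul_affineProdPow_update_zero (c : ℝ) (b : ι → ℝ) (D : ι → ℕ) :
    ∑ i, D i * b i * affineProdPow c b (update D i (D i - 1)) 0
      = (∑ i, D i * b i) * c ^ (∑ i, D i - 1) := by
  rw [sum_mul]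
  refine sum_congr rfl fun i _ => ?_
  rcases Nat.eq_zero_or_pos (D i) with h | h
  · simp [h]
  · have hsum := sum_apply_update_add (fun _ d => d) D i (D i - 1)
    rw [affineProdPow_zero]
    congr 2
    omega

lemma hasDerivAt_sum_mul_affineProdPow_update (c : ℝ) (b : ι → ℝ) (D : ι → ℕ) :
    HasDerivAt (fun t => ∑ i, D i * b i * affineProdPow c b (update D i (D i - 1)) t)
      (((∑ i, D i * b i) ^ 2 - ∑ i, D i * b i ^ 2) * c ^ (∑ i, D i - 2)) 0 := by
  set S := ∑ j, (D j : ℝ) * b j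
  set e := c ^ (∑ j, D j - 2)
  have hterm (i : ι) :
      HasDerivAt (fun t => D i * b i * affineProdPow c b (update D i (D i - 1)) t)
        (D i * b i * ((S - b i) * e)) 0 := by
    rcases Nat.eq_zero_or_pos (D i) with h | h
    · simpa [h] using hasDerivAt_const (0 : ℝ) (0 : ℝ)
    refine ((hasDerivAt_affineProdPow c b _ 0).const_mul (D i * b i : ℝ)).congr_deriv ?_
    have hsum := sum_apply_update_add (fun _ d => d) D i (D i - 1)
    have hwsum := sum_apply_update_add (fun j d => (d : ℝ) * b j) D i (D i - 1)
    push_cast [Nat.cast_sub h] at hwsum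
    rw [sum_mul_affineProdPow_update_zero]
    congr 2
    · linarith
    · congr 1
      omega
  refine (HasDerivAt.fun_sum fun i _ => hterm i).congr_deriv ?_
  have hsplit (i : ι) :
      D i * b i * ((S - b i) * e) = S * e * (D i * b i) - e * (D i * b i ^ 2) := by
    ring
  simp only [hsplit, sum_sub_distrib, ← mul_sum]
  ring

lemma exists_hasDerivAt_sum_mul_affineProdPow {β : Type*} (S : Finset β) (w : β → ℝ) (c : ℝ)
    (b : ι → ℝ) (D : β → ι → ℕ) :
    ∃ F' : ℝ → ℝ,
      (∀ t, HasDerivAt (fun t => ∑ A ∈ S, w A * affineProdPow c b (D A) t) (F' t) t) ∧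
      F' 0 = ∑ A ∈ S, w A * ((∑ i, D A i * b i) * c ^ (∑ i, D A i - 1)) ∧
      HasDerivAt F' (∑ A ∈ S, w A *
        (((∑ i, D A i * b i) ^ 2 - ∑ i, D A i * b i ^ 2) * c ^ (∑ i, D A i - 2))) 0 :=
  ⟨fun t => ∑ A ∈ S, w A * ∑ i, D A i * b i * affineProdPow c b (update (D A) i (D A i - 1)) t,
    fun t => HasDerivAt.fun_sum fun A _ => (hasDerivAt_affineProdPow c b (D A) t).const_mul _,
    by simp only [sum_mul_affineProdPow_update_zero],
    HasDerivAt.fun_sum fun A _ => (hasDerivAt_sum_mul_affineProdPow_update c b (D A)).const_mul _⟩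

end AffineProdPow

lemma deriv_rpow_eq_zero_and_deriv_deriv_rpow {F F' : ℝ → ℝ} {F'' p x : ℝ}
    (hF : ∀ t, HasDerivAt F (F' t) t) (hF' : HasDerivAt F' F'' x) (hpos : 0 < F x)
    (hcrit : F' x = 0) :
    deriv (fun t => F t ^ p) x = 0 ∧
      deriv (deriv fun t => F t ^ p) x = p * F x ^ p * (F'' / F x) := by
  have hd : deriv (fun t => F t ^ p) =ᶠ[nhds x] fun t => p * F t ^ (p - 1) * F' t := by
    filter_upwards [(hF x).continuousAt.eventually (eventually_gt_nhds hpos)] with t ht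
    rw [((hF t).rpow_const (Or.inl ht.ne')).deriv]
    ring
  refine ⟨hd.self_of_nhds.trans (by simp [hcrit]), ?_⟩
  have h2 := (((hF x).rpow_const (p := p - 1) (Or.inl hpos.ne')).const_mul p).fun_mul hF'
  rw [hd.deriv_eq, h2.deriv, hcrit, mul_zero, zero_add, Real.rpow_sub_one hpos.ne']
  ring

lemma Equiv.Perm.exists_apply_eq_and_apply_eq {α : Type*} [DecidableEq α] {a b c d : α}
    (h : a = b ↔ c = d) : ∃ σ : Equiv.Perm α, σ a = c ∧ σ b = d := by
  by_cases hab : a = b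
  · subst hab
    exact ⟨Equiv.swap a c, by simp, by simp [← h.1 rfl]⟩
  have hcd : c ≠ d := fun hcd => hab (h.2 hcd)
  refine ⟨Equiv.swap (Equiv.swap a c b) d * Equiv.swap a c, ?_, by simp⟩
  have hc : Equiv.swap a c b ≠ c := fun hbc =>
    hab ((Equiv.swap a c).injective (hbc.trans (Equiv.swap_apply_left a c).symm)).symm
  simpa using Equiv.swap_apply_of_ne_of_ne (Ne.symm hc) hcd

section CenteringKernel

variable {ι : Type*} [Fintype ι] [DecidableEq ι]

variable (ι) in
noncomputable def centeringKernel (i i' : ι) : ℝ :=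
  if i = i' then 1 else -1 / (Fintype.card ι - 1)

lemma sum_mul_mul_centeringKernel (hι : 1 < Fintype.card ι) (x : ι → ℝ) :
    ∑ i, ∑ i', x i * x i' * centeringKernel ι i i'
      = (Fintype.card ι * ∑ i, x i ^ 2 - (∑ i, x i) ^ 2) / (Fintype.card ι - 1) := by
  have hk : (Fintype.card ι : ℝ) - 1 ≠ 0 := by
    have : (1 : ℝ) < Fintype.card ι := by exact_mod_cast hι
    linarith
  have hsplit (i i' : ι) : centeringKernel ι i i'
      = (Fintype.card ι * (if i = i' then 1 else 0) - 1) / (Fintype.card ι - 1) := by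
    unfold centeringKernel
    split_ifs <;> simp [hk]
  simp only [hsplit, mul_div_assoc', ← sum_div]
  congr 1
  simp only [mul_sub, mul_ite, mul_one, mul_zero, sum_sub_distrib, ← mul_sum, sum_ite_eq,
    mem_univ, if_true, sq, sum_mul_sum]
  rw [mul_sum]
  congr 1
  exact sum_congr rfl fun _ _ => by ring

lemma eq_mul_centeringKernel_of_sum_eq_zero {g : ι → ι → ℝ} (hι : 1 < Fintype.card ι)
    (hg : ∀ i i' p p', (i = i' ↔ p = p') → g i i' = g p p') (i i' : ι)
    (hsum : ∑ j, g i j = 0) : g i i' = g i i * centeringKernel ι i i' := by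
  by_cases hii : i = i'
  · simp [hii, centeringKernel]
  have hk : (Fintype.card ι : ℝ) - 1 ≠ 0 := by
    have : (1 : ℝ) < Fintype.card ι := by exact_mod_cast hι
    linarith
  have hoff : ∑ j ∈ univ.erase i, g i j = (Fintype.card ι - 1) * g i i' := by
    rw [sum_congr rfl fun j hj => hg i j i i' (by simp [Ne.symm (ne_of_mem_erase hj), hii]),
      sum_const, card_erase_of_mem (mem_univ i), card_univ, nsmul_eq_mul,
      Nat.cast_sub hι.le, Nat.cast_one]
  rw [← add_sum_erase _ _ (mem_univ i), hoff] at hsum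
  simp only [centeringKernel, hii, if_false]
  field_simp
  linarith

end CenteringKernel

lemma sum_mul_sq_sum_mul {β κ : Type*} (S : Finset β) (w : β → ℝ) (s : Finset κ) (c : κ → ℝ)
    (Y : β → κ → ℝ) :
    ∑ A ∈ S, w A * (∑ k ∈ s, c k * Y A k) ^ 2
      = ∑ k ∈ s, ∑ l ∈ s, c k * c l * ∑ A ∈ S, w A * (Y A k * Y A l) := by
  simp only [sq, sum_mul_sum]
  simp only [mul_sum]
  rw [sum_comm]
  refine sum_congr rfl fun k _ => ?_
  rw [sum_comm]
  exact sum_congr rfl fun l _ => sum_congr rfl fun A _ => by ring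

structure RowColInvariant {ι α : Type*} (S : Finset (ι → ι → α)) (w : (ι → ι → α) → ℝ) :
    Prop where
  reindex_mem : ∀ (σ τ : Equiv.Perm ι), ∀ A ∈ S, (fun i j => A (σ i) (τ j)) ∈ S
  weight_reindex : ∀ (σ τ : Equiv.Perm ι) (A : ι → ι → α), w (fun i j => A (σ i) (τ j)) = w A

namespace RowColInvariant

variable {ι α : Type*} {S : Finset (ι → ι → α)} {w : (ι → ι → α) → ℝ}

lemma sum_mul_reindex (h : RowColInvariant S w) (σ τ : Equiv.Perm ι) (g : (ι → ι → α) → ℝ) :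
    ∑ A ∈ S, w A * g (fun i j => A (σ i) (τ j)) = ∑ A ∈ S, w A * g A := by
  refine sum_nbij' (fun A i j => A (σ i) (τ j)) (fun A i j => A (σ.symm i) (τ.symm j))
    (fun A hA => h.reindex_mem σ τ A hA) (fun A hA => h.reindex_mem _ _ A hA)
    (fun A _ => ?_) (fun A _ => ?_) (fun A _ => by rw [h.weight_reindex])
  all_goals ext i j; simp

lemma of_mem_iff [Fintype ι] {R : Type*} [AddCommMonoid R] {g : α → R} {r : R}
    (hS : ∀ A, A ∈ S ↔ (∀ i, ∑ j, g (A i j) = r) ∧ ∀ j, ∑ i, g (A i j) = r) (φ : α → ℝ) :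
    RowColInvariant S fun A => ∏ i, ∏ j, φ (A i j) := by
  refine ⟨fun σ τ A hA => ?_, fun σ τ A => ?_⟩
  · rw [hS] at hA ⊢
    exact ⟨fun i => (Equiv.sum_comp τ fun j => g (A (σ i) j)).trans (hA.1 (σ i)),
      fun j => (Equiv.sum_comp σ fun i => g (A i (τ j))).trans (hA.2 (τ j))⟩
  · exact (Equiv.prod_comp σ fun i => ∏ j, φ (A i (τ j))).trans
      (prod_congr rfl fun i _ => Equiv.prod_comp τ fun j => φ (A i j))

variable [DecidableEq ι]

lemma sum_mul_entries_eq (h : RowColInvariant S w) (g : α → α → ℝ) {i i' j j' p p' q q' : ι}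
    (hi : i = i' ↔ p = p') (hj : j = j' ↔ q = q') :
    ∑ A ∈ S, w A * g (A i j) (A i' j') = ∑ A ∈ S, w A * g (A p q) (A p' q') := by
  obtain ⟨σ, rfl, rfl⟩ := Equiv.Perm.exists_apply_eq_and_apply_eq hi.symm
  obtain ⟨τ, rfl, rfl⟩ := Equiv.Perm.exists_apply_eq_and_apply_eq hj.symm
  exact h.sum_mul_reindex σ τ fun A => g (A p q) (A p' q')

variable [Fintype ι] {f : α → ℝ} {r : ℝ}

lemma sum_mul_entry (h : RowColInvariant S w) (hrow : ∀ A ∈ S, ∀ i, ∑ j, f (A i j) = r)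
    (i j : ι) : ∑ A ∈ S, w A * f (A i j) = r / Fintype.card ι * ∑ A ∈ S, w A := by
  have : Nonempty ι := ⟨i⟩
  have hk : (Fintype.card ι : ℝ) ≠ 0 := by exact_mod_cast Fintype.card_ne_zero
  have hrowsum : ∑ j', ∑ A ∈ S, w A * f (A i j') = r * ∑ A ∈ S, w A := by
    rw [sum_comm, mul_sum]
    exact sum_congr rfl fun A hA => by rw [← mul_sum, hrow A hA i, mul_comm]
  rw [sum_congr rfl fun j' _ => h.sum_mul_entries_eq (fun a _ => f a) (i' := i) (j' := j')
    (p := i) (q := j) (p' := i) (q' := j) (by simp) (by simp), sum_const, card_univ,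
    nsmul_eq_mul] at hrowsum
  field_simp
  linarith

lemma sum_entry_mul_div_sum (h : RowColInvariant S w) (hrow : ∀ A ∈ S, ∀ i, ∑ j, f (A i j) = r)
    (hZ : ∑ A ∈ S, w A ≠ 0) (i j : ι) :
    ∑ A ∈ S, f (A i j) * (w A / ∑ A ∈ S, w A) = r / Fintype.card ι := by
  calc _ = (∑ A ∈ S, w A * f (A i j)) / ∑ A ∈ S, w A := by
        rw [sum_div]; exact sum_congr rfl fun _ _ => by ring
    _ = _ := by rw [h.sum_mul_entry hrow, mul_div_assoc, div_self hZ, mul_one]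

lemma sum_mul_centered_mul_centered (h : RowColInvariant S w)
    (hrow : ∀ A ∈ S, ∀ i, ∑ j, f (A i j) = r) (hcol : ∀ A ∈ S, ∀ j, ∑ i, f (A i j) = r)
    (hι : 1 < Fintype.card ι) (i j i' j' p q : ι) :
    ∑ A ∈ S, w A * ((f (A i j) - r / Fintype.card ι) * (f (A i' j') - r / Fintype.card ι))
      = (∑ A ∈ S, w A * (f (A p q) - r / Fintype.card ι) ^ 2)
        * centeringKernel ι i i' * centeringKernel ι j j' := by
  set c := r / Fintype.card ι
  set g : ι → ι → ι → ι → ℝ :=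
    fun i j i' j' => ∑ A ∈ S, w A * ((f (A i j) - c) * (f (A i' j') - c))
  have hk : (Fintype.card ι : ℝ) ≠ 0 := by positivity
  have hpattern {i j i' j' p q p' q' : ι} (hi : i = i' ↔ p = p') (hj : j = j' ↔ q = q') :
      g i j i' j' = g p q p' q' :=
    h.sum_mul_entries_eq (fun a b => (f a - c) * (f b - c)) hi hj
  have hcentered {x : ι → ℝ} (hx : ∑ l, x l = r) : ∑ l, (x l - c) = 0 := by
    rw [sum_sub_distrib, hx, sum_const, card_univ, nsmul_eq_mul, mul_div_cancel₀ _ hk, sub_self]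
  have hcolsum (j j' : ι) : ∑ i', g i j i' j' = 0 := by
    simp only [g, sum_comm (s := univ), ← mul_sum]
    exact sum_eq_zero fun A hA => by rw [hcentered (hcol A hA j'), mul_zero, mul_zero]
  have hrowsum (j : ι) : ∑ j', g i j i j' = 0 := by
    simp only [g, sum_comm (s := univ), ← mul_sum]
    exact sum_eq_zero fun A hA => by rw [hcentered (hrow A hA i), mul_zero, mul_zero]
  calc g i j i' j' = g i j i j' * centeringKernel ι i i' :=
        eq_mul_centeringKernel_of_sum_eq_zero hι (fun _ _ _ _ hi => hpattern hi Iff.rfl) i i'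
          (hcolsum j j')
    _ = g i j i j * centeringKernel ι j j' * centeringKernel ι i i' := by
        rw [eq_mul_centeringKernel_of_sum_eq_zero hι (g := fun j j' => g i j i j')
          (fun _ _ _ _ hj => hpattern Iff.rfl hj) j j' (hrowsum j)]
    _ = _ := by
        rw [hpattern (p := p) (q := q) (p' := p) (q' := q) (by simp) (by simp)]
        simp only [g, sq]
        ring

lemma sum_mul_bilinear (h : RowColInvariant S w) (hrow : ∀ A ∈ S, ∀ i, ∑ j, f (A i j) = r)
    (ξ ν : ι → ℝ) :
    ∑ A ∈ S, w A * ∑ i, ∑ j, ξ i * ν j * f (A i j)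
      = r / Fintype.card ι * (∑ A ∈ S, w A) * (∑ i, ξ i) * ∑ j, ν j := by
  have hswap : ∑ A ∈ S, w A * ∑ i, ∑ j, ξ i * ν j * f (A i j)
      = ∑ i, ∑ j, ξ i * ν j * ∑ A ∈ S, w A * f (A i j) := by
    simp only [mul_sum]
    rw [sum_comm]
    refine sum_congr rfl fun i _ => ?_
    rw [sum_comm]
    exact sum_congr rfl fun j _ => sum_congr rfl fun A _ => by ring
  rw [hswap, mul_assoc, sum_mul_sum, mul_sum]
  refine sum_congr rfl fun i _ => ?_
  rw [mul_sum]
  exact sum_congr rfl fun j _ => by rw [h.sum_mul_entry hrow]; ring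

lemma sum_mul_bilinear_sq (h : RowColInvariant S w)
    (hrow : ∀ A ∈ S, ∀ i, ∑ j, f (A i j) = r) (hcol : ∀ A ∈ S, ∀ j, ∑ i, f (A i j) = r)
    (hι : 1 < Fintype.card ι) (ξ ν : ι → ℝ) (hξ : ∑ i, ξ i = 0) (p q : ι) :
    ∑ A ∈ S, w A * (∑ i, ∑ j, ξ i * ν j * f (A i j)) ^ 2
      = (∑ A ∈ S, w A * (f (A p q) - r / Fintype.card ι) ^ 2)
        * ((Fintype.card ι * ∑ i, ξ i ^ 2) / (Fintype.card ι - 1))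
        * ((Fintype.card ι * ∑ j, ν j ^ 2 - (∑ j, ν j) ^ 2) / (Fintype.card ι - 1)) := by
  have hcenter (A : ι → ι → α) : ∑ i, ∑ j, ξ i * ν j * f (A i j)
      = ∑ x : ι × ι, ξ x.1 * ν x.2 * (f (A x.1 x.2) - r / Fintype.card ι) := by
    simp only [Fintype.sum_prod_type, mul_sub, sum_sub_distrib, ← sum_mul, ← mul_sum, hξ]
    simp
  have hkron (g g' : ι → ι → ℝ) : ∑ x : ι × ι, ∑ y : ι × ι, g x.1 y.1 * g' x.2 y.2
      = (∑ i, ∑ i', g i i') * ∑ j, ∑ j', g' j j' := by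
    simp only [Fintype.sum_prod_type]
    rw [sum_mul_sum]
    exact sum_congr rfl fun i _ => sum_congr rfl fun j _ => (sum_mul_sum _ _ _ _).symm
  simp only [hcenter, sum_mul_sq_sum_mul,
    h.sum_mul_centered_mul_centered hrow hcol hι _ _ _ _ p q]
  calc _ = (∑ A ∈ S, w A * (f (A p q) - r / Fintype.card ι) ^ 2)
        * ((∑ i, ∑ i', ξ i * ξ i' * centeringKernel ι i i')
          * ∑ j, ∑ j', ν j * ν j' * centeringKernel ι j j') := by
        rw [← hkron, mul_sum]
        exact sum_congr rfl fun x _ => by rw [mul_sum]; exact sum_congr rfl fun y _ => by ring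
    _ = _ := by rw [sum_mul_mul_centeringKernel hι, sum_mul_mul_centeringKernel hι, hξ]; ring

end RowColInvariant

namespace RowColInvariant

variable {ι α : Type*} [Fintype ι] [DecidableEq ι] {S : Finset (ι → ι → α)}
  {w : (ι → ι → α) → ℝ} {f : α → ℕ} {r : ℕ}

lemma exists_hasDerivAt_sum_mul_affineProdPow_rowSum (h : RowColInvariant S w)
    (hrow : ∀ A ∈ S, ∀ i, ∑ j, f (A i j) = r) (hcol : ∀ A ∈ S, ∀ j, ∑ i, f (A i j) = r)
    (hι : 1 < Fintype.card ι) (ν : ι → ℕ) (ξ : ι → ℝ) (hξ : ∑ i, ξ i = 0) (c : ℝ) (i₀ j₀ : ι) :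
    ∃ F' : ℝ → ℝ,
      (∀ t, HasDerivAt (fun t => ∑ A ∈ S, w A *
        affineProdPow c ξ (fun i => ∑ j, ν j * f (A i j)) t) (F' t) t) ∧
      ∑ A ∈ S, w A * affineProdPow c ξ (fun i => ∑ j, ν j * f (A i j)) 0
        = c ^ (r * ∑ j, ν j) * ∑ A ∈ S, w A ∧
      F' 0 = 0 ∧
      HasDerivAt F' (c ^ (r * ∑ j, ν j - 2) *
        ((∑ A ∈ S, w A * ((f (A i₀ j₀) : ℝ) - r / Fintype.card ι) ^ 2)
            * ((Fintype.card ι * ∑ i, ξ i ^ 2) / (Fintype.card ι - 1))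
            * ((Fintype.card ι * ∑ j, (ν j : ℝ) ^ 2 - (∑ j, (ν j : ℝ)) ^ 2)
              / (Fintype.card ι - 1))
          - r / Fintype.card ι * (∑ A ∈ S, w A) * (∑ i, ξ i ^ 2) * ∑ j, (ν j : ℝ))) 0 := by
  set e : (ι → ι → α) → ι → ℕ := fun A i => ∑ j, ν j * f (A i j)
  have hrowR : ∀ A ∈ S, ∀ i, ∑ j, (f (A i j) : ℝ) = r := fun A hA i => by
    exact_mod_cast hrow A hA i
  have hcolR : ∀ A ∈ S, ∀ j, ∑ i, (f (A i j) : ℝ) = r := fun A hA j => by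
    exact_mod_cast hcol A hA j
  have he (A : ι → ι → α) (b : ι → ℝ) :
      ∑ i, (e A i : ℝ) * b i = ∑ i, ∑ j, b i * ν j * (f (A i j) : ℝ) := by
    simp only [e, Nat.cast_sum, Nat.cast_mul, sum_mul]
    exact sum_congr rfl fun i _ => sum_congr rfl fun j _ => by ring
  have hsum_e : ∀ A ∈ S, ∑ i, e A i = r * ∑ j, ν j := fun A hA => by
    simp only [e, sum_comm (s := univ) (t := univ), ← mul_sum, hcol A hA, mul_comm]
  obtain ⟨F', hF', hF'0, hF''⟩ := exists_hasDerivAt_sum_mul_affineProdPow S w c ξ e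
  refine ⟨F', hF', ?_, ?_, ?_⟩
  · rw [mul_sum]
    exact sum_congr rfl fun A hA => by rw [affineProdPow_zero, hsum_e A hA, mul_comm]
  · rw [hF'0, sum_congr rfl fun A hA => by rw [hsum_e A hA, he, ← mul_assoc, mul_comm],
      ← mul_sum, h.sum_mul_bilinear (f := fun a => (f a : ℝ)) hrowR, hξ]
    ring
  · convert hF'' using 1
    calc _ = ∑ A ∈ S, c ^ (r * ∑ j, ν j - 2) *
          (w A * (∑ i, ∑ j, ξ i * ν j * (f (A i j) : ℝ)) ^ 2
            - w A * ∑ i, ∑ j, ξ i ^ 2 * ν j * (f (A i j) : ℝ)) := by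
          rw [← mul_sum, sum_sub_distrib,
            h.sum_mul_bilinear_sq (f := fun a => (f a : ℝ)) hrowR hcolR hι _ _ hξ i₀ j₀,
            h.sum_mul_bilinear (f := fun a => (f a : ℝ)) hrowR]
      _ = _ := sum_congr rfl fun A hA => by rw [hsum_e A hA, he, he A fun i => ξ i ^ 2]; ring

theorem deriv_rpow_sum_mul_affineProdPow (h : RowColInvariant S w)
    (hrow : ∀ A ∈ S, ∀ i, ∑ j, f (A i j) = r) (hcol : ∀ A ∈ S, ∀ j, ∑ i, f (A i j) = r)
    (hι : 1 < Fintype.card ι) (hZ : 0 < ∑ A ∈ S, w A) (ν : ι → ℕ) (hN : 2 ≤ r * ∑ j, ν j)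
    (ξ : ι → ℝ) (hξ : ∑ i, ξ i = 0) {c C : ℝ} (hc : 0 < c) (hC : 0 < C) (p : ℝ) (i₀ j₀ : ι)
    {G : ℝ → ℝ} (hG : G = fun t =>
      (C * ∑ A ∈ S, w A * affineProdPow c ξ (fun i => ∑ j, ν j * f (A i j)) t) ^ p) :
    deriv G 0 = 0 ∧
      deriv (deriv G) 0 = p * (C * (c ^ (r * ∑ j, ν j) * ∑ A ∈ S, w A)) ^ p / c ^ 2 *
        ((∑ A ∈ S, ((f (A i₀ j₀) : ℝ) - r / Fintype.card ι) ^ 2 * (w A / ∑ A ∈ S, w A))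
            * ((Fintype.card ι * ∑ i, ξ i ^ 2) / (Fintype.card ι - 1))
            * ((Fintype.card ι * ∑ j, (ν j : ℝ) ^ 2 - (∑ j, (ν j : ℝ)) ^ 2)
              / (Fintype.card ι - 1))
          - r / Fintype.card ι * (∑ i, ξ i ^ 2) * ∑ j, (ν j : ℝ)) := by
  subst hG
  obtain ⟨F', hF', hF0, hcrit, hF''⟩ :=
    h.exists_hasDerivAt_sum_mul_affineProdPow_rowSum hrow hcol hι ν ξ hξ c i₀ j₀
  obtain ⟨hd1, hd2⟩ := deriv_rpow_eq_zero_and_deriv_deriv_rpow (p := p)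
    (fun t => (hF' t).const_mul C) (hF''.const_mul C) (by rw [hF0]; positivity)
    (by rw [hcrit, mul_zero])
  refine ⟨hd1, ?_⟩
  have hV : ∑ A ∈ S, w A * ((f (A i₀ j₀) : ℝ) - r / Fintype.card ι) ^ 2
      = (∑ A ∈ S, w A) * ∑ A ∈ S, ((f (A i₀ j₀) : ℝ) - r / Fintype.card ι) ^ 2
        * (w A / ∑ A ∈ S, w A) := by
    rw [mul_sum]
    exact sum_congr rfl fun A _ => by field_simp
  obtain ⟨N, hN⟩ : ∃ N, r * ∑ j, ν j = N + 2 := ⟨_, (Nat.sub_add_cancel hN).symm⟩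
  rw [hd2, hF0, hV, hN, Nat.add_sub_cancel, pow_add]
  generalize ∑ A ∈ S, ((f (A i₀ j₀) : ℝ) - r / Fintype.card ι) ^ 2 * (w A / ∑ A ∈ S, w A) = V
  generalize ∑ A ∈ S, w A = Z at hZ ⊢
  field_simp

end RowColInvariant

section SemimagicSquares

variable (k M : ℕ)

def semimagicSquares : Finset (Fin k → Fin k → Fin (M + 1)) :=
  univ.filter fun A => (∀ i, ∑ j, (A i j : ℕ) = M) ∧ ∀ j, ∑ i, (A i j : ℕ) = M

variable {k M}

lemma mem_semimagicSquares {A : Fin k → Fin k → Fin (M + 1)} :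
    A ∈ semimagicSquares k M ↔ (∀ i, ∑ j, (A i j : ℕ) = M) ∧ ∀ j, ∑ i, (A i j : ℕ) = M := by
  simp [semimagicSquares]

lemma diagonal_mem_semimagicSquares :
    (fun i j => if i = j then Fin.last M else 0) ∈ semimagicSquares k M := by
  simp [mem_semimagicSquares, apply_ite (Fin.val (n := M + 1))]

lemma rowColInvariant_semimagicSquares (φ : Fin (M + 1) → ℝ) :
    RowColInvariant (semimagicSquares k M) fun A => ∏ i, ∏ j, φ (A i j) :=
  RowColInvariant.of_mem_iff (fun _ => mem_semimagicSquares) φ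

end SemimagicSquares

lemma Fin.sum_comp_eq_of_eq_dite {α M : Type*} [AddCommMonoid M] {m k : ℕ} (hk : m ≤ k)
    {μ : Fin m → α} {μe : Fin k → α} {z : α}
    (hμe : ∀ j : Fin k, μe j = if h : (j : ℕ) < m then μ ⟨j, h⟩ else z) (g : α → M)
    (hg : g z = 0) : ∑ j, g (μe j) = ∑ i, g (μ i) := by
  obtain ⟨d, rfl⟩ := Nat.exists_eq_add_of_le hk
  simp [Fin.sum_univ_add, hμe, hg]

lemma mul_pow_mul_rpow_one_div {C x Z : ℝ} {M : ℕ} (hC : 0 ≤ C) (hx : 0 ≤ x) (hZ : 0 ≤ Z)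
    (hM : M ≠ 0) (n : ℕ) :
    (C * (x ^ (M * n) * Z)) ^ (1 / (M : ℝ)) = C ^ (1 / (M : ℝ)) * Z ^ (1 / (M : ℝ)) * x ^ n := by
  rw [Real.mul_rpow hC (by positivity), Real.mul_rpow (by positivity) hZ, pow_mul', one_div,
    Real.pow_rpow_inv_natCast (pow_nonneg hx n) hM]
  ring

/-- **Lemma 1.** With G_{k,M}(t) = β_{k,M}^ψ(U_k + tξ) for a unit vector ξ with
Σ ξ_j = 0, one has G_{k,M}'(0) = 0 and
G_{k,M}''(0) = [(M!)^{2k−k²}]^{1/M} (Z_{k,M})^{1/M} k^{1−n}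
  [ (k²/(k−1)²) · (Var_{k,M}(a_{1,1})/M) · (kΣμᵢ² − n²) − n ]. -/
theorem GkM_derivatives_at_zero
    (n m : ℕ) (hm : 2 ≤ m) (hmn : m ≤ n)
    (μ : Fin m → ℕ) (hμsum : ∑ i, μ i = n)
    (k M : ℕ) (hk : m ≤ k) (hM : 1 ≤ M)
    (μe : Fin k → ℕ)
    (hμe : ∀ j : Fin k, μe j = if h : (j : ℕ) < m then μ ⟨j, h⟩ else 0)
    (𝒜 : Finset (Fin k → Fin k → Fin (M + 1)))
    (h𝒜 : 𝒜 = Finset.univ.filter fun A =>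
      (∀ i, ∑ j, (A i j : ℕ) = M) ∧ ∀ j, ∑ i, (A i j : ℕ) = M)
    (w : (Fin k → Fin k → Fin (M + 1)) → ℝ)
    (hw : ∀ A, w A = ∏ i, ∏ j,
      ((M - (A i j : ℕ)).factorial : ℝ) / ((A i j : ℕ).factorial : ℝ))
    (Z : ℝ) (hZ : Z = ∑ A ∈ 𝒜, w A)
    (E Var : ℝ)
    (hE : E = ∑ A ∈ 𝒜,
      ((A ⟨0, by omega⟩ ⟨0, by omega⟩ : ℕ) : ℝ) * (w A / Z))
    (hVar : Var = ∑ A ∈ 𝒜,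
      (((A ⟨0, by omega⟩ ⟨0, by omega⟩ : ℕ) : ℝ) - E) ^ 2 * (w A / Z))
    (ξ : Fin k → ℝ) (hξnorm : ∑ j, ξ j ^ 2 = 1) (hξsum : ∑ j, ξ j = 0)
    (G : ℝ → ℝ)
    (hG : ∀ t, G t = ((M.factorial : ℝ) ^ (2 * (k : ℤ) - (k : ℤ) ^ 2) *
      ∑ A ∈ 𝒜, (∏ i, ∏ j, ((k : ℝ)⁻¹ + t * ξ i) ^ (μe j * (A i j : ℕ))) * w A)
        ^ ((1 : ℝ) / M)) :
    deriv G 0 = 0 ∧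
    deriv (deriv G) 0 =
      ((M.factorial : ℝ) ^ (2 * (k : ℤ) - (k : ℤ) ^ 2)) ^ ((1 : ℝ) / M) *
        Z ^ ((1 : ℝ) / M) * (k : ℝ) ^ (1 - (n : ℤ)) *
        ((k : ℝ) ^ 2 / ((k : ℝ) - 1) ^ 2 * (Var / M) *
            ((k : ℝ) * ∑ i, (μ i : ℝ) ^ 2 - (n : ℝ) ^ 2) - n) := by
  obtain rfl : 𝒜 = semimagicSquares k M := h𝒜
  have hk1 : 1 < Fintype.card (Fin k) := by rw [Fintype.card_fin]; omega
  have hk0 : (0 : ℝ) < k := by exact_mod_cast (by omega : 0 < k)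
  have hinv : RowColInvariant (semimagicSquares k M) w := (funext hw).symm ▸
    rowColInvariant_semimagicSquares fun a => ((M - a : ℕ).factorial : ℝ) / (a : ℕ).factorial
  have hZpos : 0 < Z :=
    hZ ▸ sum_pos (fun A _ => hw A ▸ by positivity) ⟨_, diagonal_mem_semimagicSquares⟩
  have hrow (A) (hA : A ∈ semimagicSquares k M) := (mem_semimagicSquares.1 hA).1
  have hVar' : ∑ A ∈ semimagicSquares k M,
      (((A ⟨0, by omega⟩ ⟨0, by omega⟩ : ℕ) : ℝ) - M / k) ^ 2 * (w A / Z) = Var := by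
    rw [hVar, hE, hZ, hinv.sum_entry_mul_div_sum (f := fun a : Fin (M + 1) => ((a : ℕ) : ℝ))
      (r := M) (fun A hA i => by exact_mod_cast hrow A hA i) (hZ ▸ hZpos.ne'), Fintype.card_fin]
  have hμe_sum : ∑ j, μe j = n := (Fin.sum_comp_eq_of_eq_dite hk hμe id rfl).trans hμsum
  obtain ⟨hd1, hd2⟩ := hinv.deriv_rpow_sum_mul_affineProdPow (f := Fin.val) hrow
    (fun A hA => (mem_semimagicSquares.1 hA).2) hk1 (hZ ▸ hZpos) μe (by rw [hμe_sum]; nlinarith)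
    ξ hξsum (c := (k : ℝ)⁻¹) (C := (M.factorial : ℝ) ^ (2 * (k : ℤ) - (k : ℤ) ^ 2))
    (inv_pos.2 hk0) (by positivity) (1 / M) ⟨0, by omega⟩ ⟨0, by omega⟩ (G := G)
    (funext fun t => by rw [hG]; simp only [affineProdPow, prod_pow_eq_pow_sum, mul_comm (w _)])
  refine ⟨hd1, hd2.trans ?_⟩
  rw [← hZ, Fintype.card_fin, hVar', hμe_sum, Fin.sum_comp_eq_of_eq_dite hk hμe _ Nat.cast_zero,
    Fin.sum_comp_eq_of_eq_dite hk hμe (fun x : ℕ => (x : ℝ) ^ 2) (by simp), hξnorm,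
    (by exact_mod_cast hμsum : ∑ i, (μ i : ℝ) = n),
    mul_pow_mul_rpow_one_div (by positivity) (by positivity) hZpos.le (by omega),
    zpow_one_sub_natCast₀ hk0.ne', inv_pow]
  field_simp
end

section
/- Fix integers k ≥ 2 and M ≥ 1, write M = qk + r with q = ⌊M/k⌋ and 0 ≤ r < k, and let U be the k×k circulant matrix whose first row is (q+1,…,q+1,q,…,q) (with r entries equal to q+1 followed by k−r entries equal to q). Then U ∈ A_{k,M}, and U maximizes w(A) over A ∈ A_{k,M}; consequently max_{A∈A_{k,M}} w(A) = [ (M−(q+1))!/(q+1)! ]^{kr} · [ (M−q)!/q! ]^{k(k−r)}. -/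
/-!
Only the row sums matter. Write `f a = (M - a)! / a!`. If two entries `a + 1 < b` of a row
summing to `M` are replaced by `a + 1` and `b - 1`, the product does not decrease, since
`f a / f (a + 1) = (M - a) (a + 1) ≤ (M - b + 1) b = f (b - 1) / f b` as long as `a + b ≤ M`.
Each such move lowers the sum of squares of the row, so repeating it ends in an equitable row:
one with entries `q` and `q + 1` only, exactly `r` of them equal to `q + 1`. Every row of the
circulant `U` is of this form, so `U` attains the row-wise bound.
-/

open Finset Function
open scoped Nat

namespace Finset

variable {ι α : Type*} [Fintype ι] [DecidableEq ι]

@[to_additive]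
theorem prod_eq_mul_mul_prod_compl_pair [CommMonoid α] {i j : ι} (hij : i ≠ j) (g : ι → α) :
    ∏ l, g l = g i * g j * ∏ l ∈ {i, j}ᶜ, g l := by
  rw [← prod_pair hij, prod_mul_prod_compl]

end Finset

section Equitable

variable {ι : Type*} [Fintype ι]

def transfer [DecidableEq ι] (x : ι → ℕ) (i j : ι) : ι → ℕ :=
  update (update x j (x j - 1)) i (x i + 1)

@[to_additive]
theorem prod_transfer_mul [DecidableEq ι] {α : Type*} [CommMonoid α] (g : ℕ → α) (x : ι → ℕ)
    {i j : ι} (hij : i ≠ j) :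
    (∏ l, g (transfer x i j l)) * (g (x i) * g (x j)) =
      (∏ l, g (x l)) * (g (x i + 1) * g (x j - 1)) := by
  have hrest : ∏ l ∈ {i, j}ᶜ, g (transfer x i j l) = ∏ l ∈ {i, j}ᶜ, g (x l) := by
    refine prod_congr rfl fun l hl => ?_
    simp only [mem_compl, mem_insert, mem_singleton, not_or] at hl
    simp [transfer, update_of_ne hl.1, update_of_ne hl.2]
  rw [prod_eq_mul_mul_prod_compl_pair hij, prod_eq_mul_mul_prod_compl_pair hij (fun l => g (x l)),
    hrest]
  simp only [transfer, update_self, update_of_ne hij.symm]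
  ac_rfl

theorem exists_equitableOn_prod_le {f : ℕ → ℝ} {M : ℕ} (hf : ∀ a, 0 < f a)
    (hf_mul : ∀ a b, a + 2 ≤ b → a + b ≤ M → f a * f b ≤ f (a + 1) * f (b - 1))
    (x : ι → ℕ) (hx : ∑ l, x l = M) :
    ∃ y : ι → ℕ, ∑ l, y l = M ∧ (Set.univ : Set ι).EquitableOn y ∧
      ∏ l, f (x l) ≤ ∏ l, f (y l) := by
  classical
  induction hN : ∑ l, x l ^ 2 using Nat.strong_induction_on generalizing x with
  | _ N ih =>
  by_cases hx_eq : (Set.univ : Set ι).EquitableOn x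
  · exact ⟨x, hx, hx_eq, le_rfl⟩
  obtain ⟨j, -, i, -, hij⟩ := Set.not_equitableOn.1 hx_eq
  have hne : i ≠ j := by rintro rfl; omega
  have hpair : x i + x j ≤ M := by
    rw [← hx, sum_eq_add_add_sum_compl_pair hne]
    exact Nat.le_add_right _ _
  have hsum := sum_transfer_add id x hne
  have hsq := sum_transfer_add (· ^ 2) x hne
  have hprod := prod_transfer_mul f x hne
  simp only [id] at hsum hsq
  have hsq_lt : (x i + 1) ^ 2 + (x j - 1) ^ 2 < x i ^ 2 + x j ^ 2 := by
    obtain ⟨b, hb⟩ : ∃ b, x j = b + 1 := ⟨x j - 1, by omega⟩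
    rw [hb] at hij ⊢
    rw [Nat.add_sub_cancel]
    nlinarith
  obtain ⟨y, hy_sum, hy_eq, hy_le⟩ := ih _ (by omega) (transfer x i j) (by omega) rfl
  refine ⟨y, hy_sum, hy_eq, le_trans ?_ hy_le⟩
  refine le_of_mul_le_mul_right ?_ (mul_pos (hf (x i)) (hf (x j)))
  rw [hprod]
  exact mul_le_mul_of_nonneg_left (hf_mul _ _ hij hpair) (prod_nonneg fun l _ => (hf _).le)

theorem prod_comp_eq_of_equitableOn {α : Type*} [CommMonoid α] (g : ℕ → α) {y : ι → ℕ}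
    (hy : (Set.univ : Set ι).EquitableOn y) :
    ∏ l, g (y l) =
      g ((∑ l, y l) / Fintype.card ι + 1) ^ ((∑ l, y l) % Fintype.card ι) *
        g ((∑ l, y l) / Fintype.card ι) ^ (Fintype.card ι - (∑ l, y l) % Fintype.card ι) := by
  classical
  set S := ∑ l, y l
  set n := Fintype.card ι
  have hval : ∀ l, y l = S / n ∨ y l = S / n + 1 := by
    rw [← coe_univ, equitableOn_iff] at hy
    exact fun l => hy l (mem_univ l)
  set L := #{l | y l = S / n + 1}
  have hL : L = S % n := by
    have hS : S = n * (S / n) + L := by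
      calc S = ∑ l, (S / n + if y l = S / n + 1 then 1 else 0) :=
            sum_congr rfl fun l _ => by rcases hval l with h | h <;> simp [h]
        _ = n * (S / n) + L := by rw [sum_add_distrib, sum_boole]; simp [n, L]
    have := Nat.div_add_mod S n
    omega
  have hLc : #{l | ¬ y l = S / n + 1} = n - L := by
    have := card_filter_add_card_filter_not (s := univ) (fun l => y l = S / n + 1)
    rw [card_univ] at this
    omega
  calc ∏ l, g (y l) = ∏ l, if y l = S / n + 1 then g (S / n + 1) else g (S / n) :=
        prod_congr rfl fun l _ => by rcases hval l with h | h <;> simp [h]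
    _ = g (S / n + 1) ^ L * g (S / n) ^ (n - L) := by rw [prod_ite, prod_const, prod_const, hLc]
    _ = _ := by rw [hL]

end Equitable

section FactorialRatio

noncomputable def factorialRatio (M a : ℕ) : ℝ := ((M - a)! : ℝ) / (a ! : ℝ)

theorem factorialRatio_pos (M a : ℕ) : 0 < factorialRatio M a := by
  unfold factorialRatio
  positivity

theorem factorialRatio_eq_mul_succ {M a : ℕ} (h : a < M) :
    factorialRatio M a = ((M - a) * (a + 1) : ℕ) * factorialRatio M (a + 1) := by
  obtain ⟨c, hc⟩ : ∃ c, M - a = c + 1 := ⟨M - a - 1, by omega⟩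
  have hc' : M - (a + 1) = c := by omega
  simp only [factorialRatio, hc, hc', Nat.factorial_succ]
  push_cast
  field_simp

theorem factorialRatio_mul_le {M a b : ℕ} (hab : a + 1 ≤ b) (hM : a + b ≤ M) :
    factorialRatio M a * factorialRatio M b ≤
      factorialRatio M (a + 1) * factorialRatio M (b - 1) := by
  have hcoef : (M - a) * (a + 1) ≤ (M - (b - 1)) * b := by
    obtain ⟨c, rfl⟩ : ∃ c, M = a + b + c := ⟨M - (a + b), by omega⟩
    obtain ⟨d, rfl⟩ : ∃ d, b = a + 1 + d := ⟨b - (a + 1), by omega⟩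
    rw [show a + (a + 1 + d) + c - a = a + c + d + 1 by omega,
      show a + (a + 1 + d) + c - (a + 1 + d - 1) = a + c + 1 by omega]
    nlinarith
  have hpos := mul_pos (factorialRatio_pos M (a + 1)) (factorialRatio_pos M b)
  rw [factorialRatio_eq_mul_succ (a := a) (by omega),
    factorialRatio_eq_mul_succ (a := b - 1) (by omega), Nat.sub_add_cancel (by omega : 1 ≤ b)]
  calc _ = ((M - a) * (a + 1) : ℕ) * (factorialRatio M (a + 1) * factorialRatio M b) := by ring
    _ ≤ ((M - (b - 1)) * b : ℕ) * (factorialRatio M (a + 1) * factorialRatio M b) := by gcongr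
    _ = _ := by ring

theorem prod_factorialRatio_le {ι : Type*} [Fintype ι] {M : ℕ} (x : ι → ℕ)
    (hx : ∑ l, x l = M) :
    ∏ l, factorialRatio M (x l) ≤
      factorialRatio M (M / Fintype.card ι + 1) ^ (M % Fintype.card ι) *
        factorialRatio M (M / Fintype.card ι) ^ (Fintype.card ι - M % Fintype.card ι) := by
  obtain ⟨y, hy_sum, hy_eq, hle⟩ := exists_equitableOn_prod_le (factorialRatio_pos M)
    (fun _ _ hab hM => factorialRatio_mul_le (by omega) hM) x hx
  rwa [prod_comp_eq_of_equitableOn _ hy_eq, hy_sum] at hle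

end FactorialRatio

theorem Fin.val_add_sub_mod_eq_val_sub {k : ℕ} (i j : Fin k) :
    ((j : ℕ) + k - i) % k = ((j - i : Fin k) : ℕ) := by
  rw [Fin.val_sub]
  congr 1
  omega

theorem Fin.sum_ite_val_lt {k r : ℕ} (q : ℕ) (hr : r ≤ k) :
    ∑ t : Fin k, (if (t : ℕ) < r then q + 1 else q) = k * q + r := by
  calc ∑ t : Fin k, (if (t : ℕ) < r then q + 1 else q)
      = ∑ t : Fin k, (q + if (t : ℕ) < r then 1 else 0) :=
        sum_congr rfl fun t _ => by split_ifs <;> rfl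
    _ = k * q + r := by
      rw [sum_add_distrib, sum_boole, Fin.card_filter_val_lt, min_eq_right hr]
      simp

theorem circulant_maximizes_w_general
    (k M : ℕ) (hk : 2 ≤ k)
    (q r : ℕ) (hq : q = M / k) (hr : r = M % k)
    (U : Fin k → Fin k → ℕ)
    (hU : ∀ i j, U i j = if ((j : ℕ) + k - (i : ℕ)) % k < r then q + 1 else q)
    (w : (Fin k → Fin k → ℕ) → ℝ)
    (hw : ∀ A, w A = ∏ i, ∏ j, ((M - A i j).factorial : ℝ) / ((A i j).factorial : ℝ)) :
    ((∀ i, ∑ j, U i j = M) ∧ (∀ j, ∑ i, U i j = M)) ∧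
    (∀ A : Fin k → Fin k → ℕ,
      (∀ i, ∑ j, A i j = M) → (∀ j, ∑ i, A i j = M) → w A ≤ w U) ∧
    w U = (((M - (q + 1)).factorial : ℝ) / ((q + 1).factorial : ℝ)) ^ (k * r) *
          (((M - q).factorial : ℝ) / (q.factorial : ℝ)) ^ (k * (k - r)) := by
  have : NeZero k := ⟨by omega⟩
  have hrk : r < k := hr ▸ Nat.mod_lt M (by omega)
  have hM : k * q + r = M := hq ▸ hr ▸ Nat.div_add_mod M k
  have hw' : ∀ A, w A = ∏ i, ∏ j, factorialRatio M (A i j) := hw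
  simp only [Fin.val_add_sub_mod_eq_val_sub] at hU
  have hrow (i : Fin k) : ∑ j, U i j = M := by
    rw [← hM, ← Fin.sum_ite_val_lt q hrk.le]
    exact Fintype.sum_equiv (Equiv.subRight i) _ _ fun j => hU i j
  have hcol (j : Fin k) : ∑ i, U i j = M := by
    rw [← hM, ← Fin.sum_ite_val_lt q hrk.le]
    exact Fintype.sum_equiv (Equiv.subLeft j) _ _ fun i => hU i j
  set B := factorialRatio M (q + 1) ^ r * factorialRatio M q ^ (k - r)
  have hU_row (i : Fin k) : ∏ j, factorialRatio M (U i j) = B := by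
    have hU_eq : (Set.univ : Set (Fin k)).EquitableOn (U i) :=
      Set.equitableOn_iff_exists_eq_eq_add_one.2 ⟨q, fun j _ => by rw [hU]; split_ifs <;> simp⟩
    rw [prod_comp_eq_of_equitableOn _ hU_eq, hrow, Fintype.card_fin, ← hq, ← hr]
  have hwU : w U = B ^ k := by simp [hw', hU_row]
  refine ⟨⟨hrow, hcol⟩, fun A hA _ => ?_, ?_⟩
  · have hA_row (i : Fin k) : ∏ j, factorialRatio M (A i j) ≤ B := by
      simpa only [Fintype.card_fin, ← hq, ← hr] using prod_factorialRatio_le (A i) (hA i)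
    calc w A ≤ ∏ _i : Fin k, B :=
          hw' A ▸ prod_le_prod (fun i _ => prod_nonneg fun j _ => (factorialRatio_pos _ _).le)
            fun i _ => hA_row i
      _ = w U := by simp [hwU]
  · rw [hwU, mul_pow, ← pow_mul, ← pow_mul, mul_comm r k, mul_comm (k - r) k]
    rfl

/-- **Proposition 4.** With M = qk + r (q = ⌊M/k⌋, 0 ≤ r < k), the circulant
matrix U whose first row has r entries q+1 followed by k−r entries q (entry
U i j = c_{(j−i) mod k}) lies in A_{k,M} and maximizes
w(A) = ∏_{i,j} (M−a_{i,j})!/a_{i,j}! over A_{k,M}; consequently the maximum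
equals [(M−(q+1))!/(q+1)!]^{kr} · [(M−q)!/q!]^{k(k−r)}. -/
theorem circulant_maximizes_w
    (k M : ℕ) (hk : 2 ≤ k) (hM : 1 ≤ M)
    (q r : ℕ) (hq : q = M / k) (hr : r = M % k)
    (U : Fin k → Fin k → ℕ)
    (hU : ∀ i j, U i j = if ((j : ℕ) + k - (i : ℕ)) % k < r then q + 1 else q)
    (w : (Fin k → Fin k → ℕ) → ℝ)
    (hw : ∀ A, w A = ∏ i, ∏ j, ((M - A i j).factorial : ℝ) / ((A i j).factorial : ℝ)) :
    ((∀ i, ∑ j, U i j = M) ∧ (∀ j, ∑ i, U i j = M)) ∧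
    (∀ A : Fin k → Fin k → ℕ,
      (∀ i, ∑ j, A i j = M) → (∀ j, ∑ i, A i j = M) → w A ≤ w U) ∧
    w U = (((M - (q + 1)).factorial : ℝ) / ((q + 1).factorial : ℝ)) ^ (k * r) *
          (((M - q).factorial : ℝ) / (q.factorial : ℝ)) ^ (k * (k - r)) :=
  circulant_maximizes_w_general k M hk q r hq hr U hU w hw
end

section
/- Fix an integer k ≥ 3. For each positive integer M, write M = qk + r with q = ⌊M/k⌋ and 0 ≤ r < k, and let w*_{k,M} = [ (M−(q+1))!/(q+1)! ]^{kr} · [ (M−q)!/q! ]^{k(k−r)}. Then lim_{M→∞} [(M!)^{2k−k²}]^{1/M} · (w*_{k,M})^{1/M} = (k−1)^{k(k−1)} / k^{k(k−2)}. -/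
/-!
Stirling's formula gives `log (a! / M ^ a) / M → α log α - α` whenever `a / M → α > 0`.
After taking logarithms and dividing by `M`, the expression is a combination of such terms with
`a = M, q, q + 1, M - q, M - q - 1`, where `q / M → 1 / k`; the powers of `M` cancel exactly.
The coefficients depend on `r = M % k`, which does not converge, but `r` only multiplies the
difference of two terms with the same limit, and `r < k` is bounded.
-/

open Filter Real Topology
open scoped Nat

theorem tendsto_log_factorial_div_sub_log :
    Tendsto (fun n : ℕ => log n ! / n - log n) atTop (𝓝 (-1)) := by
  have hn : Tendsto (fun n : ℕ => (n : ℝ)) atTop atTop := tendsto_natCast_atTop_atTop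
  have hseq : Tendsto (fun n : ℕ => log (Stirling.stirlingSeq n) / n) atTop (𝓝 0) :=
    ((continuousAt_log (by positivity)).tendsto.comp
      Stirling.tendsto_stirlingSeq_sqrt_pi).div_atTop hn
  have hlog : Tendsto (fun n : ℕ => log (2 * n) / (2 * n)) atTop (𝓝 0) :=
    isLittleO_log_id_atTop.tendsto_div_nhds_zero.comp (hn.const_mul_atTop two_pos)
  have := (hseq.add hlog).sub_const 1
  rw [add_zero, zero_sub] at this
  refine this.congr' ?_
  filter_upwards [eventually_ne_atTop 0] with n hn0
  rw [Stirling.log_stirlingSeq_formula, log_div (by positivity) (exp_ne_zero 1), log_exp]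
  field_simp
  ring

noncomputable def scaledLogFactorial (M a : ℕ) : ℝ := (log a ! - a * log M) / M

theorem tendsto_atTop_of_tendsto_natCast_div {a : ℕ → ℕ} {α : ℝ} (hα : 0 < α)
    (ha : Tendsto (fun M : ℕ => (a M : ℝ) / M) atTop (𝓝 α)) : Tendsto a atTop atTop := by
  rw [← tendsto_natCast_atTop_iff (R := ℝ)]
  refine (ha.pos_mul_atTop hα tendsto_natCast_atTop_atTop).congr' ?_
  filter_upwards [eventually_ne_atTop 0] with M hM
  field_simp

theorem tendsto_scaledLogFactorial {a : ℕ → ℕ} {α : ℝ} (hα : 0 < α)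
    (ha : Tendsto (fun M : ℕ => (a M : ℝ) / M) atTop (𝓝 α)) :
    Tendsto (fun M => scaledLogFactorial M (a M)) atTop (𝓝 (α * log α - α)) := by
  have ha_top := tendsto_atTop_of_tendsto_natCast_div hα ha
  have hstir := tendsto_log_factorial_div_sub_log.comp ha_top
  have hlog := (continuousAt_log hα.ne').tendsto.comp ha
  have := (ha.mul hstir).add (ha.mul hlog)
  rw [mul_neg_one, neg_add_eq_sub] at this
  refine this.congr' ?_
  filter_upwards [eventually_ne_atTop 0, ha_top.eventually_ne_atTop 0] with M hM haM
  simp only [Function.comp_apply, scaledLogFactorial]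
  rw [log_div (by positivity) (by positivity)]
  field_simp
  ring

theorem tendsto_natDiv_div_atTop {k : ℕ} (hk : k ≠ 0) :
    Tendsto (fun M : ℕ => ((M / k : ℕ) : ℝ) / M) atTop (𝓝 (1 / k)) := by
  have hk' : (0 : ℝ) < k := by positivity
  have hfloor := (tendsto_nat_floor_div_atTop (R := ℝ)).comp
    (tendsto_natCast_atTop_atTop.atTop_div_const hk')
  have := hfloor.div_const (k : ℝ)
  rw [one_div] at this ⊢
  refine this.congr' ?_
  filter_upwards [eventually_ne_atTop 0] with M hM
  simp only [Function.comp_apply, Nat.floor_div_eq_div]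
  field_simp

theorem Filter.Tendsto.natCast_add_const_div {a : ℕ → ℕ} {α : ℝ}
    (ha : Tendsto (fun M : ℕ => (a M : ℝ) / M) atTop (𝓝 α)) (c : ℕ) :
    Tendsto (fun M : ℕ => ((a M + c : ℕ) : ℝ) / M) atTop (𝓝 α) := by
  have := ha.add (tendsto_const_div_atTop_nhds_zero_nat (c : ℝ))
  rw [add_zero] at this
  refine this.congr fun M => ?_
  push_cast
  rw [add_div]

theorem Filter.Tendsto.natCast_self_sub_div {a : ℕ → ℕ} {α : ℝ}
    (ha : Tendsto (fun M : ℕ => (a M : ℝ) / M) atTop (𝓝 α)) (hα : α < 1) :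
    Tendsto (fun M : ℕ => ((M - a M : ℕ) : ℝ) / M) atTop (𝓝 (1 - α)) := by
  refine (tendsto_const_nhds.sub ha).congr' ?_
  filter_upwards [eventually_gt_atTop 0, ha.eventually (gt_mem_nhds hα)] with M hM hlt
  have hM' : (0 : ℝ) < M := by exact_mod_cast hM
  have hle : a M ≤ M := by
    rw [div_lt_one hM'] at hlt
    exact_mod_cast hlt.le
  rw [Nat.cast_sub hle]
  field_simp

/-- `log (M!^(2k-k²) w*_{k,M}) / M`, arranged so that the only term depending on `M % k` is
`M % k` times a quantity tending to `0`. -/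
noncomputable def scaledLogWstar (k M : ℕ) : ℝ :=
  (2 * k - k ^ 2 : ℝ) * scaledLogFactorial M M +
    (M % k : ℕ) * (k * (scaledLogFactorial M (M - (M / k + 1)) -
      scaledLogFactorial M (M / k + 1) - (scaledLogFactorial M (M - M / k) -
      scaledLogFactorial M (M / k)))) +
    k ^ 2 * (scaledLogFactorial M (M - M / k) - scaledLogFactorial M (M / k))

-- The corrections `a * log M` cancel: `M!^(2k-k²) w*_{k,M}` has as many factors in its
-- numerators as in its denominators.
theorem log_factorial_combination_eq {k M : ℕ} (hk : 2 ≤ k) (hM : 0 < M) :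
    ((2 * k - k ^ 2 : ℝ) * log M ! + ((k * (M % k) : ℕ) : ℝ) *
        (log (M - (M / k + 1))! - log (M / k + 1)!) +
      ((k * (k - M % k) : ℕ) : ℝ) * (log (M - M / k)! - log (M / k)!)) / M =
    scaledLogWstar k M := by
  have hq : M / k + 1 ≤ M := Nat.div_lt_self hM (by omega)
  have hr : M % k ≤ k := (Nat.mod_lt M (by omega)).le
  have hdiv : (k * (M / k : ℕ) + (M % k : ℕ) : ℝ) = M := by exact_mod_cast Nat.div_add_mod M k
  unfold scaledLogWstar scaledLogFactorial
  push_cast [Nat.cast_sub hq, Nat.cast_sub (Nat.div_le_self M k), Nat.cast_sub hr]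
  linear_combination (-2 * k * log M / M) * hdiv

theorem tendsto_scaledLogWstar {k : ℕ} (hk : 2 ≤ k) :
    Tendsto (scaledLogWstar k) atTop (𝓝 (k ^ 2 - 2 * k +
      k ^ 2 * (((1 - 1 / k) * log (1 - 1 / k) - (1 - 1 / k)) - (1 / k * log (1 / k) - 1 / k)))) := by
  have hk0 : (0 : ℝ) < k := by positivity
  have hinv : 1 / (k : ℝ) < 1 := by rw [div_lt_one hk0]; exact_mod_cast (by omega : 1 < k)
  have hq := tendsto_natDiv_div_atTop (k := k) (by omega)
  have hq1 := hq.natCast_add_const_div 1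
  have hself : Tendsto (fun M : ℕ => (M : ℝ) / M) atTop (𝓝 1) :=
    tendsto_const_nhds.congr' <| (eventually_ne_atTop 0).mono fun M hM => by field_simp
  have hX := (tendsto_scaledLogFactorial (by linarith) (hq1.natCast_self_sub_div hinv)).sub
    (tendsto_scaledLogFactorial (by positivity) hq1)
  have hY := (tendsto_scaledLogFactorial (by linarith) (hq.natCast_self_sub_div hinv)).sub
    (tendsto_scaledLogFactorial (by positivity) hq)
  have hXY : Tendsto (fun M : ℕ => (k : ℝ) * (scaledLogFactorial M (M - (M / k + 1)) -
      scaledLogFactorial M (M / k + 1) - (scaledLogFactorial M (M - M / k) -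
      scaledLogFactorial M (M / k)))) atTop (𝓝 0) := by
    simpa using (hX.sub hY).const_mul (k : ℝ)
  have hr : IsBoundedUnder (· ≤ ·) atTop (fun M : ℕ => ‖((M % k : ℕ) : ℝ)‖) :=
    isBoundedUnder_of ⟨k, fun M => by
      rw [Real.norm_natCast]; exact_mod_cast (Nat.mod_lt M (by omega)).le⟩
  have hlim := (((tendsto_scaledLogFactorial one_pos hself).const_mul (2 * k - k ^ 2 : ℝ)).add
    (isBoundedUnder_le_mul_tendsto_zero hr hXY)).add (hY.const_mul ((k : ℝ) ^ 2))
  rw [log_one, mul_zero, zero_sub, add_zero, mul_neg_one, neg_sub] at hlim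
  exact hlim

theorem exp_limit_scaledLogWstar_eq {k : ℕ} (hk : 2 ≤ k) :
    exp (k ^ 2 - 2 * k +
      k ^ 2 * (((1 - 1 / k) * log (1 - 1 / k) - (1 - 1 / k)) - (1 / k * log (1 / k) - 1 / k))) =
    ((k : ℝ) - 1) ^ (k * (k - 1)) / (k : ℝ) ^ (k * (k - 2)) := by
  have hk1 : (0 : ℝ) < k - 1 := by
    have : (2 : ℝ) ≤ k := by exact_mod_cast hk
    linarith
  have hk0 : (0 : ℝ) < k := by linarith
  have hlog : log (((k : ℝ) - 1) ^ (k * (k - 1)) / (k : ℝ) ^ (k * (k - 2))) =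
      (k * (k - 1) : ℝ) * log (k - 1) - (k * (k - 2) : ℝ) * log k := by
    rw [log_div (by positivity) (by positivity), log_pow, log_pow]
    push_cast [Nat.cast_sub (by omega : 1 ≤ k), Nat.cast_sub hk]
    rfl
  rw [← exp_log (by positivity : (0 : ℝ) < ((k : ℝ) - 1) ^ (k * (k - 1)) / (k : ℝ) ^ (k * (k - 2))),
    hlog, one_sub_div hk0.ne', log_div hk1.ne' hk0.ne', one_div, log_inv]
  congr 1
  field_simp
  ring

/-- **Equation (17).** For fixed k ≥ 3, with q = ⌊M/k⌋ and r = M mod k and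
w*_{k,M} = [(M−(q+1))!/(q+1)!]^{kr} · [(M−q)!/q!]^{k(k−r)},
lim_{M→∞} [(M!)^{2k−k²}]^{1/M} (w*_{k,M})^{1/M} = (k−1)^{k(k−1)} / k^{k(k−2)}. -/
theorem wstar_growth_rate
    (k : ℕ) (hk : 3 ≤ k)
    (wstar : ℕ → ℝ)
    (hw : ∀ M, wstar M =
      (((M - (M / k + 1)).factorial : ℝ) / ((M / k + 1).factorial : ℝ)) ^ (k * (M % k)) *
      (((M - M / k).factorial : ℝ) / ((M / k).factorial : ℝ)) ^ (k * (k - M % k))) :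
    Filter.Tendsto
      (fun M : ℕ =>
        ((M.factorial : ℝ) ^ (2 * (k : ℤ) - (k : ℤ) ^ 2)) ^ ((1 : ℝ) / M) *
          (wstar M) ^ ((1 : ℝ) / M))
      Filter.atTop
      (nhds (((k : ℝ) - 1) ^ (k * (k - 1)) / (k : ℝ) ^ (k * (k - 2)))) := by
  have hk2 : 2 ≤ k := by omega
  rw [← exp_limit_scaledLogWstar_eq hk2]
  refine ((continuous_exp.tendsto _).comp (tendsto_scaledLogWstar hk2)).congr' ?_
  filter_upwards [eventually_gt_atTop 0] with M hM
  have hpos : 0 < (M ! : ℝ) ^ (2 * (k : ℤ) - k ^ 2) := by positivity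
  have hwpos : 0 < wstar M := by rw [hw]; positivity
  rw [Function.comp_apply, ← log_factorial_combination_eq hk2 hM, rpow_def_of_pos hpos,
    rpow_def_of_pos hwpos, ← exp_add, hw, log_zpow, log_mul (by positivity) (by positivity),
    log_pow, log_pow, log_div (by positivity) (by positivity),
    log_div (by positivity) (by positivity)]
  push_cast
  congr 1
  ring
end

section
/- Fix an integer k ≥ 3 and a positive integer M, set ρ = M/k, write M = qk + r with q = ⌊M/k⌋ and 0 ≤ r < k, and let U be the k×k circulant matrix whose first row has r entries equal to q+1 followed by k−r entries equal to q. Let A ∈ A_{k,M} and set T = (t_{i,j}) = A − U. If ρ ≥ 4 and max_{i,j} |t_{i,j}| ≤ ρ/9, then | log(w(A)/w(U)) − log w̃(A) | ≤ (4/ρ²) Σ_{i,j} (|t_{i,j}| + 1)³ + (3/(2ρ)) Σ_{i,j} |t_{i,j}|, where w̃(A) = exp( −(1/2)·((k−2)/(k−1))·(1/ρ)·Σ_{i,j} t_{i,j}² ). -/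
/-!
Write `log w(B) = ∑ logWeight M (B i j)` with `logWeight M n = log ((M - n)! / n!)`. Between
`u = U i j` and `a = A i j` the difference `logWeight M a - logWeight M u` telescopes into a sum of
`g m = log m + log (M + 1 - m)` over the integers between `u` and `a`. Linearise `g` at
`x = q + 1/2`, with `y = M + 1 - x`: the constant term contributes `t · g x`, which cancels after
summing over all entries because `T` has zero total; the linear term contributes
`-g'(x) t² / 2` up to an error `O(|t| / ρ)`, and `g'(x) = 1/x - 1/y` lies within `1/ρ²` of
`(k - 2) / ((k - 1) ρ)` because `x ≈ ρ` and `y ≈ (k - 1) ρ`. The second-order Taylor remainder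
of `g` is `O((|t| + 1)² / ρ²)` per step, hence `O(|t| (|t| + 1)² / ρ²)` per entry.
-/

open Finset Real
open scoped Nat

lemma abs_log_one_add_sub_self_le {x : ℝ} (hx : |x| ≤ 1 / 2) : |log (1 + x) - x| ≤ 2 * x ^ 2 := by
  have h := abs_log_sub_add_sum_range_le (x := -x) (by rw [abs_neg]; linarith) 1
  rw [abs_neg] at h
  calc |log (1 + x) - x| = |∑ i ∈ range 1, (-x) ^ (i + 1) / (i + 1) + log (1 - -x)| := by
        simp only [sum_range_one]; ring_nf
    _ ≤ |x| ^ (1 + 1) / (1 - |x|) := h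
    _ ≤ |x| ^ 2 / (1 / 2) := by gcongr; linarith
    _ = 2 * x ^ 2 := by rw [sq_abs]; ring

lemma abs_log_add_add_log_sub_sub_le {x y h : ℝ} (hx : 0 < x) (hy : 0 < y) (hhx : |h| ≤ x / 2)
    (hhy : |h| ≤ y / 2) :
    |log (x + h) + log (y - h) - (log x + log y) - h * (x⁻¹ - y⁻¹)| ≤
      2 * h ^ 2 * (x⁻¹ ^ 2 + y⁻¹ ^ 2) := by
  have hx' : |h * x⁻¹| ≤ 1 / 2 := by
    rw [abs_mul, abs_inv, abs_of_pos hx, ← div_eq_mul_inv, div_le_iff₀ hx]; linarith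
  have hy' : |-h * y⁻¹| ≤ 1 / 2 := by
    rw [abs_mul, abs_neg, abs_inv, abs_of_pos hy, ← div_eq_mul_inv, div_le_iff₀ hy]; linarith
  have h1 : 0 < 1 + h * x⁻¹ := by linarith [(abs_le.1 hx').1]
  have h2 : 0 < 1 + -h * y⁻¹ := by linarith [(abs_le.1 hy').1]
  have hlx : log (x + h) = log x + log (1 + h * x⁻¹) := by
    rw [← log_mul hx.ne' h1.ne']; congr 1; field_simp
  have hly : log (y - h) = log y + log (1 + -h * y⁻¹) := by
    rw [← log_mul hy.ne' h2.ne']; congr 1; field_simp; ring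
  calc _ = |(log (1 + h * x⁻¹) - h * x⁻¹) + (log (1 + -h * y⁻¹) - -h * y⁻¹)| := by
        rw [hlx, hly]; ring_nf
    _ ≤ 2 * (h * x⁻¹) ^ 2 + 2 * (-h * y⁻¹) ^ 2 :=
        (abs_add_le _ _).trans (add_le_add (abs_log_one_add_sub_self_le hx')
          (abs_log_one_add_sub_self_le hy'))
    _ = _ := by ring

noncomputable def logWeight (M n : ℕ) : ℝ := log ((M - n)! : ℝ) - log (n ! : ℝ)

lemma logWeight_succ {M n : ℕ} (h : n < M) :
    logWeight M (n + 1) = logWeight M n - (log ((n : ℝ) + 1) + log ((M : ℝ) - n)) := by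
  have hfac : (M - n)! = (M - n) * (M - (n + 1))! := by
    rw [show M - n = M - (n + 1) + 1 by omega, Nat.factorial_succ]
  have hMn : (0 : ℝ) < M - n := by rw [sub_pos]; exact_mod_cast h
  unfold logWeight
  rw [hfac, Nat.factorial_succ]
  push_cast [Nat.cast_sub h.le]
  rw [log_mul hMn.ne' (by positivity), log_mul (by positivity) (by positivity)]
  ring

lemma logWeight_sub_logWeight {M lo hi : ℕ} (h : lo ≤ hi) (hhi : hi ≤ M) :
    logWeight M hi - logWeight M lo = -∑ m ∈ Ioc lo hi, (log (m : ℝ) + log ((M : ℝ) + 1 - m)) := by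
  induction hi, h using Nat.le_induction with
  | base => simp
  | succ n hn ih =>
    have hstep : (M : ℝ) + 1 - (n + 1) = M - n := by ring
    rw [sum_Ioc_succ_top hn, logWeight_succ (by omega)]
    push_cast
    rw [hstep]
    linarith [ih (by omega)]

lemma log_prod_prod_factorial_div {ι κ : Type*} [Fintype ι] [Fintype κ] (M : ℕ)
    (B : ι → κ → ℕ) :
    log (∏ i, ∏ j, ((M - B i j)! : ℝ) / (B i j)!) = ∑ i, ∑ j, logWeight M (B i j) := by
  rw [log_prod fun i _ => by positivity]
  refine sum_congr rfl fun i _ => ?_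
  rw [log_prod fun j _ => by positivity]
  exact sum_congr rfl fun j _ => log_div (by positivity) (by positivity)

lemma sum_Ioc_cast_sub (x : ℝ) {lo hi : ℕ} (h : lo ≤ hi) :
    ∑ m ∈ Ioc lo hi, ((m : ℝ) - x) = ((hi : ℝ) - lo) * ((lo + hi + 1) / 2 - x) := by
  induction hi, h using Nat.le_induction with
  | base => simp
  | succ n hn ih =>
    rw [sum_Ioc_succ_top hn, ih]
    push_cast
    ring

lemma sum_circulant_row {k : ℕ} [NeZero k] (M : ℕ) (i : Fin k) :
    ∑ j : Fin k, (if ((j : ℕ) + k - i) % k < M % k then M / k + 1 else M / k) = M := by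
  have hr : M % k ≤ k := (Nat.mod_lt M (Nat.pos_of_neZero k)).le
  set q := M / k
  set r := M % k
  have hsub (j : Fin k) : ((j : ℕ) + k - i) % k = ((j - i : Fin k) : ℕ) := by
    rw [Fin.val_sub]; congr 1; omega
  simp only [hsub]
  have hshift :=
    Equiv.sum_comp (Equiv.subRight i) (fun j : Fin k => if (j : ℕ) < r then q + 1 else q)
  simp only [Equiv.subRight_apply] at hshift
  rw [hshift, Fin.sum_univ_eq_sum_range (fun n => if n < r then q + 1 else q)]
  have hr' : ({n ∈ range k | n < r} : Finset ℕ) = range r := by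
    ext n; simp only [mem_filter, mem_range]; omega
  have hsplit (n : ℕ) : (if n < r then q + 1 else q) = q + if n < r then 1 else 0 := by
    split_ifs <;> rfl
  simp only [hsplit, sum_add_distrib, sum_const, card_range, smul_eq_mul, sum_boole, hr',
    Nat.cast_id, q, r, Nat.div_add_mod]

lemma abs_sum_Ioc_log_sub_linear_le {M lo hi u : ℕ} {ρ x y : ℝ} (hρ : 4 ≤ ρ)
    (hxy : x + y = M + 1) (hx : 7 * ρ / 8 ≤ x) (hy : 2 * ρ ≤ y) (hlh : lo ≤ hi)
    (hu : u = lo ∨ u = hi) (hux : |(u : ℝ) - x| ≤ 1 / 2) (hs : (hi : ℝ) - lo ≤ ρ / 9) :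
    |∑ m ∈ Ioc lo hi, (log (m : ℝ) + log ((M : ℝ) + 1 - m)) -
        ((hi : ℝ) - lo) * (log x + log y + (x⁻¹ - y⁻¹) * ((lo + hi + 1) / 2 - x))| ≤
      4 * ((hi : ℝ) - lo) * ((hi : ℝ) - lo + 1 / 2) ^ 2 / ρ ^ 2 := by
  set s : ℝ := (hi : ℝ) - lo
  have hx0 : 0 < x := by linarith
  have hy0 : 0 < y := by linarith
  have hinv : x⁻¹ ^ 2 + y⁻¹ ^ 2 ≤ 2 / ρ ^ 2 := by
    have h1 : x⁻¹ ≤ (7 * ρ / 8)⁻¹ := inv_anti₀ (by positivity) hx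
    have h2 : y⁻¹ ≤ (2 * ρ)⁻¹ := inv_anti₀ (by positivity) hy
    calc _ ≤ (7 * ρ / 8)⁻¹ ^ 2 + (2 * ρ)⁻¹ ^ 2 := by gcongr
      _ = (64 / 49 + 1 / 4) / ρ ^ 2 := by field_simp; ring
      _ ≤ 2 / ρ ^ 2 := by gcongr; norm_num
  have hterm : ∀ m ∈ Ioc lo hi, |log (m : ℝ) + log ((M : ℝ) + 1 - m) -
      (log x + log y + ((m : ℝ) - x) * (x⁻¹ - y⁻¹))| ≤ 4 * (s + 1 / 2) ^ 2 / ρ ^ 2 := by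
    intro m hm
    rw [mem_Ioc] at hm
    have hlo : (lo : ℝ) + 1 ≤ m := by exact_mod_cast hm.1
    have hhi : (m : ℝ) ≤ hi := by exact_mod_cast hm.2
    have hmx : |(m : ℝ) - x| ≤ s + 1 / 2 := by
      rw [abs_le] at hux ⊢; rcases hu with rfl | rfl <;> constructor <;> linarith
    calc _ = |log (x + (m - x)) + log (y - (m - x)) - (log x + log y) -
            ((m : ℝ) - x) * (x⁻¹ - y⁻¹)| := by
          congr 1; rw [show (M : ℝ) + 1 - m = y - (m - x) by linarith]; ring_nf
      _ ≤ 2 * ((m : ℝ) - x) ^ 2 * (x⁻¹ ^ 2 + y⁻¹ ^ 2) :=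
          abs_log_add_add_log_sub_sub_le hx0 hy0 (by linarith) (by linarith)
      _ ≤ 2 * (s + 1 / 2) ^ 2 * (2 / ρ ^ 2) := by
          have hsq := sq_le_sq' (abs_le.1 hmx).1 (abs_le.1 hmx).2
          exact mul_le_mul (by linarith) hinv (by positivity) (by positivity)
      _ = 4 * (s + 1 / 2) ^ 2 / ρ ^ 2 := by ring
  have hlinear : s * (log x + log y + (x⁻¹ - y⁻¹) * ((lo + hi + 1) / 2 - x)) =
      ∑ m ∈ Ioc lo hi, (log x + log y + ((m : ℝ) - x) * (x⁻¹ - y⁻¹)) := by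
    rw [sum_add_distrib, sum_const, ← sum_mul, sum_Ioc_cast_sub x hlh, Nat.card_Ioc,
      nsmul_eq_mul, Nat.cast_sub hlh]
    ring
  rw [hlinear, ← sum_sub_distrib]
  calc _ ≤ _ := abs_sum_le_sum_abs _ _
    _ ≤ #(Ioc lo hi) • (4 * (s + 1 / 2) ^ 2 / ρ ^ 2) := sum_le_card_nsmul _ _ _ hterm
    _ = _ := by rw [Nat.card_Ioc, nsmul_eq_mul, Nat.cast_sub hlh]; ring

lemma abs_logWeight_sub_add_linear_le {M a u : ℕ} {ρ x y : ℝ} (hρ : 4 ≤ ρ)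
    (hxy : x + y = M + 1) (hx : 7 * ρ / 8 ≤ x) (hy : 2 * ρ ≤ y) (hux : |(u : ℝ) - x| ≤ 1 / 2)
    (hau : |(a : ℝ) - u| ≤ ρ / 9) :
    |logWeight M a - logWeight M u + ((a : ℝ) - u) * (log x + log y) +
        (x⁻¹ - y⁻¹) * (((a : ℝ) - u) ^ 2 / 2 + ((a : ℝ) - u) * (u + 1 / 2 - x))| ≤
      4 * |(a : ℝ) - u| * (|(a : ℝ) - u| + 1 / 2) ^ 2 / ρ ^ 2 := by
  have hux' := abs_le.1 hux
  have hu : u ≤ M := by exact_mod_cast (by linarith : (u : ℝ) ≤ M)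
  have ha : a ≤ M := by
    have := (abs_le.1 hau).2
    exact_mod_cast (by linarith : (a : ℝ) ≤ M)
  rcases le_total u a with h | h
  · rw [abs_of_nonneg (sub_nonneg.2 (by exact_mod_cast h))] at hau ⊢
    have hI := abs_sum_Ioc_log_sub_linear_le hρ hxy hx hy h (Or.inl rfl) hux hau
    rw [logWeight_sub_logWeight h ha, ← abs_neg]
    convert hI using 2
    ring
  · rw [abs_of_nonpos (sub_nonpos.2 (by exact_mod_cast h)), neg_sub] at hau ⊢
    have hI := abs_sum_Ioc_log_sub_linear_le hρ hxy hx hy h (Or.inr rfl) hux hau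
    rw [show logWeight M a - logWeight M u = -(logWeight M u - logWeight M a) by ring,
      logWeight_sub_logWeight h hu, neg_neg]
    convert hI using 2
    ring

lemma abs_logWeight_sub_add_le {M a u : ℕ} {ρ x y D : ℝ} (hρ : 4 ≤ ρ) (hxy : x + y = M + 1)
    (hx : 7 * ρ / 8 ≤ x) (hy : 2 * ρ ≤ y) (hux : |(u : ℝ) - x| ≤ 1 / 2)
    (hD : |D - (x⁻¹ - y⁻¹)| ≤ 1 / ρ ^ 2) (hau : |(a : ℝ) - u| ≤ ρ / 9) :
    |logWeight M a - logWeight M u + ((a : ℝ) - u) * (log x + log y) + D / 2 * ((a : ℝ) - u) ^ 2|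
      ≤ 4 / ρ ^ 2 * (|(a : ℝ) - u| + 1) ^ 3 + 3 / (2 * ρ) * |(a : ℝ) - u| := by
  have hlin := abs_logWeight_sub_add_linear_le hρ hxy hx hy hux hau
  have hB : |x⁻¹ - y⁻¹| ≤ 3 / (2 * ρ) := by
    have hx' : x⁻¹ ≤ 3 / (2 * ρ) := by
      rw [inv_le_comm₀ (by linarith) (by positivity)]; field_simp; linarith
    have hy' : y⁻¹ ≤ 3 / (2 * ρ) := by
      rw [inv_le_comm₀ (by linarith) (by positivity)]; field_simp; linarith
    exact abs_sub_le_of_nonneg_of_le (inv_nonneg.2 (by linarith)) hx'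
      (inv_nonneg.2 (by linarith)) hy'
  have hκ : |(u : ℝ) + 1 / 2 - x| ≤ 1 := by
    rw [abs_le] at hux ⊢; constructor <;> linarith
  generalize logWeight M a - logWeight M u + ((a : ℝ) - u) * (log x + log y) = L at hlin ⊢
  generalize (a : ℝ) - u = t at hlin hau ⊢
  generalize x⁻¹ - y⁻¹ = B at hlin hB hD
  generalize (u : ℝ) + 1 / 2 - x = κ at hlin hκ
  have hpoly : 4 * |t| * (|t| + 1 / 2) ^ 2 + |t| ^ 2 / 2 ≤ 4 * (|t| + 1) ^ 3 := by
    nlinarith [abs_nonneg t]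
  calc |L + D / 2 * t ^ 2|
      = |(L + B * (t ^ 2 / 2 + t * κ)) + (D - B) * (t ^ 2 / 2) + -(B * t * κ)| := by
        congr 1; ring
    _ ≤ |L + B * (t ^ 2 / 2 + t * κ)| + |D - B| * (|t| ^ 2 / 2) + |B| * |t| * |κ| := by
        refine (abs_add_three _ _ _).trans_eq ?_
        rw [abs_neg, abs_mul, abs_mul, abs_mul, abs_of_nonneg (by positivity : (0 : ℝ) ≤ t ^ 2 / 2),
          sq_abs]
    _ ≤ 4 * |t| * (|t| + 1 / 2) ^ 2 / ρ ^ 2 + 1 / ρ ^ 2 * (|t| ^ 2 / 2) +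
          3 / (2 * ρ) * |t| * 1 := by gcongr
    _ = (4 * |t| * (|t| + 1 / 2) ^ 2 + |t| ^ 2 / 2) / ρ ^ 2 + 3 / (2 * ρ) * |t| := by ring
    _ ≤ 4 * (|t| + 1) ^ 3 / ρ ^ 2 + 3 / (2 * ρ) * |t| := by gcongr
    _ = _ := by ring

lemma abs_inv_sub_inv_le {a b c : ℝ} (hc : 0 < c) (hab : c ≤ a * b) :
    |a⁻¹ - b⁻¹| ≤ |a - b| / c := by
  have hab0 : a * b ≠ 0 := (hc.trans_le hab).ne'
  rw [inv_sub_inv (left_ne_zero_of_mul hab0) (right_ne_zero_of_mul hab0), abs_div, abs_sub_comm,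
    abs_of_pos (hc.trans_le hab)]
  gcongr

lemma abs_div_mul_one_div_sub_inv_sub_inv_le {k M q : ℕ} {ρ : ℝ} (hk : 3 ≤ k)
    (hMρ : (M : ℝ) = k * ρ) (hρ : 4 ≤ ρ) (hqρ : (q : ℝ) ≤ ρ) (hρq : ρ ≤ q + 1) :
    |((k : ℝ) - 2) / ((k : ℝ) - 1) * (1 / ρ) - (((q : ℝ) + 1 / 2)⁻¹ - ((M : ℝ) + 1 / 2 - q)⁻¹)|
      ≤ 1 / ρ ^ 2 := by
  have hk3 : (3 : ℝ) ≤ k := by exact_mod_cast hk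
  have hρ0 : 0 < ρ := by linarith
  have hD : ((k : ℝ) - 2) / ((k : ℝ) - 1) * (1 / ρ) = ρ⁻¹ - (((k : ℝ) - 1) * ρ)⁻¹ := by
    field_simp [show (k : ℝ) - 1 ≠ 0 by linarith]; ring
  have hx := abs_inv_sub_inv_le (a := ρ) (b := (q : ℝ) + 1 / 2) (c := ρ * (7 * ρ / 8))
    (by positivity) (by gcongr; linarith)
  have hy := abs_inv_sub_inv_le (a := ((k : ℝ) - 1) * ρ) (b := (M : ℝ) + 1 / 2 - q)
    (c := 2 * ρ * (2 * ρ)) (by positivity)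
    (mul_le_mul (by nlinarith) (by nlinarith) (by positivity) (by nlinarith))
  have hxρ : |ρ - ((q : ℝ) + 1 / 2)| ≤ 1 / 2 := by rw [abs_le]; constructor <;> linarith
  have hyρ : |((k : ℝ) - 1) * ρ - ((M : ℝ) + 1 / 2 - q)| ≤ 3 / 2 := by
    rw [abs_le]; constructor <;> nlinarith
  rw [hD, show ∀ a b c d : ℝ, a - b - (c - d) = (a - c) - (b - d) by intros; ring]
  calc _ ≤ _ := abs_sub _ _
    _ ≤ (1 / 2) / (ρ * (7 * ρ / 8)) + (3 / 2) / (2 * ρ * (2 * ρ)) := by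
        gcongr
        · exact hx.trans (by gcongr)
        · exact hy.trans (by gcongr)
    _ = (4 / 7 + 3 / 8) / ρ ^ 2 := by field_simp; ring
    _ ≤ 1 / ρ ^ 2 := by gcongr; norm_num

lemma abs_sum_sum_sub_le {ι κ : Type*} [Fintype ι] [Fintype κ] {f t b : ι → κ → ℝ} {C D : ℝ}
    (ht : ∑ i, ∑ j, t i j = 0) (hb : ∀ i j, |f i j + t i j * C + D / 2 * t i j ^ 2| ≤ b i j) :
    |∑ i, ∑ j, f i j - -(D / 2 * ∑ i, ∑ j, t i j ^ 2)| ≤ ∑ i, ∑ j, b i j := by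
  have hsum : ∑ i, ∑ j, f i j - -(D / 2 * ∑ i, ∑ j, t i j ^ 2) =
      ∑ i, ∑ j, (f i j + t i j * C + D / 2 * t i j ^ 2) := by
    simp only [sum_add_distrib, ← sum_mul, ← mul_sum, ht]
    ring
  rw [hsum]
  exact (abs_sum_le_sum_abs _ _).trans
    (sum_le_sum fun i _ => (abs_sum_le_sum_abs _ _).trans (sum_le_sum fun j _ => hb i j))

theorem gaussian_approximation_of_w_general
    (k M : ℕ) (hk : 3 ≤ k)
    (ρ : ℝ) (hρ : ρ = (M : ℝ) / k)
    (q r : ℕ) (hq : q = M / k) (hr : r = M % k)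
    (U : Fin k → Fin k → ℕ)
    (hU : ∀ i j, U i j = if ((j : ℕ) + k - (i : ℕ)) % k < r then q + 1 else q)
    (w : (Fin k → Fin k → ℕ) → ℝ)
    (hw : ∀ B, w B = ∏ i, ∏ j, ((M - B i j).factorial : ℝ) / ((B i j).factorial : ℝ))
    (A : Fin k → Fin k → ℕ)
    (hArow : ∀ i, ∑ j, A i j = M)
    (t : Fin k → Fin k → ℝ) (ht : ∀ i j, t i j = (A i j : ℝ) - (U i j : ℝ))
    (hρ4 : 4 ≤ ρ) (htmax : ∀ i j, |t i j| ≤ ρ / 9) :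
    |Real.log (w A / w U) -
        Real.log (Real.exp (-(1 / 2) * (((k : ℝ) - 2) / ((k : ℝ) - 1)) * (1 / ρ) *
          ∑ i, ∑ j, t i j ^ 2))| ≤
      4 / ρ ^ 2 * ∑ i, ∑ j, (|t i j| + 1) ^ 3 +
        3 / (2 * ρ) * ∑ i, ∑ j, |t i j| := by
  have : NeZero k := ⟨by omega⟩
  have hMρ : (M : ℝ) = k * ρ := by rw [hρ]; field_simp
  have hk3 : (3 : ℝ) ≤ k := by exact_mod_cast hk
  have hfloor : q = ⌊ρ⌋₊ := by rw [hq, hρ, Nat.floor_div_eq_div]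
  have hqρ : (q : ℝ) ≤ ρ := hfloor ▸ Nat.floor_le (by linarith)
  have hρq : ρ ≤ q + 1 := hfloor ▸ (Nat.lt_floor_add_one ρ).le
  have hUx (i j : Fin k) : |(U i j : ℝ) - (q + 1 / 2)| ≤ 1 / 2 := by
    rw [abs_le, hU]; split_ifs <;> push_cast <;> constructor <;> linarith
  have ht0 : ∑ i, ∑ j, t i j = 0 := by
    simp only [ht, sum_sub_distrib, ← Nat.cast_sum, hArow, hU, hq, hr, sum_circulant_row,
      sub_self, sum_const_zero]
  have hentry (i j : Fin k) := abs_logWeight_sub_add_le (M := M) (a := A i j) (u := U i j)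
    (x := q + 1 / 2) (y := M + 1 / 2 - q) hρ4 (by ring) (by linarith) (by nlinarith) (hUx i j)
    (abs_div_mul_one_div_sub_inv_sub_inv_le hk hMρ hρ4 hqρ hρq) (by rw [← ht]; exact htmax i j)
  rw [hw, hw, log_div (by positivity) (by positivity), log_exp, log_prod_prod_factorial_div,
    log_prod_prod_factorial_div]
  convert abs_sum_sum_sub_le ht0 fun i j => by simpa only [← ht] using hentry i j using 2
  · simp only [← sum_sub_distrib]; ring
  · simp only [sum_add_distrib, mul_sum]

/-- **Lemma 4 (discrete Gaussian approximation of w).** Fix k ≥ 3, let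
ρ = M/k, let U be the circulant matrix built from q = ⌊M/k⌋ and r = M mod k,
and for A ∈ A_{k,M} set T = A − U.  If ρ ≥ 4 and max_{i,j}|t_{i,j}| ≤ ρ/9, then
|log(w(A)/w(U)) − log w̃(A)| ≤ (4/ρ²) Σ (|t_{i,j}|+1)³ + (3/(2ρ)) Σ |t_{i,j}|,
where w̃(A) = exp(−½ · ((k−2)/(k−1)) · (1/ρ) · Σ t_{i,j}²). -/
theorem gaussian_approximation_of_w
    (k M : ℕ) (hk : 3 ≤ k) (hM : 1 ≤ M)
    (ρ : ℝ) (hρ : ρ = (M : ℝ) / k)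
    (q r : ℕ) (hq : q = M / k) (hr : r = M % k)
    (U : Fin k → Fin k → ℕ)
    (hU : ∀ i j, U i j = if ((j : ℕ) + k - (i : ℕ)) % k < r then q + 1 else q)
    (w : (Fin k → Fin k → ℕ) → ℝ)
    (hw : ∀ B, w B = ∏ i, ∏ j, ((M - B i j).factorial : ℝ) / ((B i j).factorial : ℝ))
    (A : Fin k → Fin k → ℕ)
    (hArow : ∀ i, ∑ j, A i j = M) (hAcol : ∀ j, ∑ i, A i j = M)
    (t : Fin k → Fin k → ℝ) (ht : ∀ i j, t i j = (A i j : ℝ) - (U i j : ℝ))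
    (hρ4 : 4 ≤ ρ) (htmax : ∀ i j, |t i j| ≤ ρ / 9) :
    |Real.log (w A / w U) -
        Real.log (Real.exp (-(1 / 2) * (((k : ℝ) - 2) / ((k : ℝ) - 1)) * (1 / ρ) *
          ∑ i, ∑ j, t i j ^ 2))| ≤
      4 / ρ ^ 2 * ∑ i, ∑ j, (|t i j| + 1) ^ 3 +
        3 / (2 * ρ) * ∑ i, ∑ j, |t i j| :=
  gaussian_approximation_of_w_general k M hk ρ hρ q r hq hr U hU w hw A hArow t ht hρ4 htmax
end
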